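/- arXiv:2005.00973 — 8 statements merged into one kernel-verified Lean document; each statement's English description precedes it below -/
import Mathlib

section
/- Let X, Y be Hilbert spaces, L: X → X a bounded self-adjoint operator, and A: D(A) ⊂ Y → X a densely defined closed operator whose adjoint A* is also densely defined. Suppose there exist δ > 0 and a closed subspace X₊ ⊂ X such that ⟨Lx, x⟩ ≥ δ‖x‖² for all x ∈ X₊ and the orthogonal complement X₊^⊥ is contained in D(A*). Then the operator A*LA, with domain contained in D(A), is self-adjoint on Y. -/
/-!
Since `A*` is closed, the closed graph theorem makes it bounded on the closed subspace
`X₊ᗮ ⊆ D(A*)`, so the `X₊ᗮ`-component of `Ay` is controlled by `‖y‖`. Together with the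
coercivity of `L` on `X₊` this gives a Gårding inequality
`ε (‖y‖² + ‖Ay‖²) ≤ ⟪LAy, Ay⟫ + μ‖y‖²`. Lax–Milgram on the graph of `A`, a Hilbert space
because `A` is closed, then makes `A*LA + μ` surjective, and a symmetric operator `T` with
`T + μ` surjective for some real `μ` is self-adjoint.
-/

open scoped RealInnerProductSpace

section Coercivity

variable {X : Type*} [NormedAddCommGroup X] [InnerProductSpace ℝ X]

theorem ContinuousLinearMap.neg_mul_le_inner_map (L : X →L[ℝ] X) (u v : X) :
    -(‖L‖ * ‖u‖ * ‖v‖) ≤ ⟪L u, v⟫ :=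
  neg_le_of_abs_le <| (abs_real_inner_le_norm _ _).trans <|
    mul_le_mul_of_nonneg_right (L.le_opNorm u) (norm_nonneg v)

theorem ContinuousLinearMap.half_mul_norm_sq_le_inner_map_self_add (L : X →L[ℝ] X) {δ : ℝ}
    (hδ : 0 < δ) {K : Submodule ℝ X} [K.HasOrthogonalProjection]
    (hK : ∀ x ∈ K, δ * ‖x‖ ^ 2 ≤ ⟪L x, x⟫) (a : X) :
    δ / 2 * ‖a‖ ^ 2 ≤
      ⟪L a, a⟫ + (δ / 2 + ‖L‖ + 2 * ‖L‖ ^ 2 / δ) * ‖Kᗮ.orthogonalProjectionOnto a‖ ^ 2 := by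
  set p := K.starProjection a
  set q := Kᗮ.starProjection a
  have hnorm : ‖a‖ ^ 2 = ‖p‖ ^ 2 + ‖q‖ ^ 2 := Submodule.norm_sq_eq_add_norm_sq_starProjection a K
  have hexpand : ⟪L a, a⟫ = ⟪L p, p⟫ + ⟪L p, q⟫ + ⟪L q, p⟫ + ⟪L q, q⟫ := by
    rw [← K.starProjection_add_starProjection_orthogonal a]
    simp only [map_add, inner_add_left, inner_add_right]
    ring
  have hp := hK p (K.starProjection_apply_mem a)
  have hpq := L.neg_mul_le_inner_map p q
  have hqp := L.neg_mul_le_inner_map q p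
  have hqq := L.neg_mul_le_inner_map q q
  -- Young's inequality absorbs the cross terms into half of the coercive term.
  have hyoung : 2 * ‖L‖ * ‖p‖ * ‖q‖ ≤ δ / 2 * ‖p‖ ^ 2 + 2 * ‖L‖ ^ 2 / δ * ‖q‖ ^ 2 := by
    have hsq : δ / 2 * ‖p‖ ^ 2 + 2 * ‖L‖ ^ 2 / δ * ‖q‖ ^ 2 - 2 * ‖L‖ * ‖p‖ * ‖q‖ =
        (δ * ‖p‖ - 2 * ‖L‖ * ‖q‖) ^ 2 / (2 * δ) := by
      field_simp
      ring
    linarith [show 0 ≤ (δ * ‖p‖ - 2 * ‖L‖ * ‖q‖) ^ 2 / (2 * δ) by positivity]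
  change δ / 2 * ‖a‖ ^ 2 ≤ ⟪L a, a⟫ + (δ / 2 + ‖L‖ + 2 * ‖L‖ ^ 2 / δ) * ‖q‖ ^ 2
  linear_combination (δ / 2) * hnorm - hexpand + hp + hpq + hqp + hqq + hyoung

theorem exists_forall_inner_map_add_eq_inner_of_coercive {W Y : Type*}
    [NormedAddCommGroup W] [InnerProductSpace ℝ W] [CompleteSpace W]
    [NormedAddCommGroup Y] [InnerProductSpace ℝ Y]
    (ψ : W →L[ℝ] Y) (φ : W →L[ℝ] X) (L : X →L[ℝ] X) {ε μ : ℝ} (hε : 0 < ε)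
    (hcoer : ∀ w, ε * ‖w‖ ^ 2 ≤ ⟪L (φ w), φ w⟫ + μ * ‖ψ w‖ ^ 2) (f : Y) :
    ∃ u, ∀ w, ⟪L (φ u), φ w⟫ + μ * ⟪ψ u, ψ w⟫ = ⟪f, ψ w⟫ := by
  let B : W →L[ℝ] W →L[ℝ] ℝ :=
    ((innerSL ℝ).comp L).bilinearComp φ φ + μ • (innerSL ℝ).bilinearComp ψ ψ
  have hB : ∀ u w, B u w = ⟪L (φ u), φ w⟫ + μ * ⟪ψ u, ψ w⟫ := fun _ _ => rfl
  have hBcoer : IsCoercive B := ⟨ε, hε, fun w => by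
    rw [hB, real_inner_self_eq_norm_sq, mul_assoc, ← sq]
    exact hcoer w⟩
  let g := (InnerProductSpace.toDual ℝ W).symm ((innerSL ℝ f).comp ψ)
  refine ⟨hBcoer.continuousLinearEquivOfBilin.symm g, fun w => ?_⟩
  rw [← hB, ← hBcoer.continuousLinearEquivOfBilin_apply, ContinuousLinearEquiv.apply_symm_apply,
    InnerProductSpace.toDual_symm_apply]
  rfl

end Coercivity

namespace LinearPMap

section ClosedGraph

variable {𝕜 E F : Type*} [NontriviallyNormedField 𝕜]
  [NormedAddCommGroup E] [NormedSpace 𝕜 E] [CompleteSpace E]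
  [NormedAddCommGroup F] [NormedSpace 𝕜 F] [CompleteSpace F]

theorem IsClosed.continuous_comp_inclusion {T : E →ₗ.[𝕜] F} (hT : T.IsClosed)
    {V : Submodule 𝕜 E} (hV : _root_.IsClosed (V : Set E)) (hVT : V ≤ T.domain) :
    Continuous (T.toFun ∘ₗ Submodule.inclusion hVT) := by
  have : CompleteSpace V := hV.completeSpace_coe
  refine (T.toFun ∘ₗ Submodule.inclusion hVT).continuous_of_isClosed_graph ?_
  have hgraph : ((T.toFun ∘ₗ Submodule.inclusion hVT).graph : Set (V × F)) =
      Prod.map Subtype.val id ⁻¹' T.graph := by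
    ext ⟨v, f⟩
    simp only [Set.mem_preimage, SetLike.mem_coe, LinearMap.mem_graph_iff, mem_graph_iff]
    refine ⟨fun h => ⟨⟨v, hVT v.2⟩, rfl, h.symm⟩, ?_⟩
    rintro ⟨y, hy, h⟩
    obtain rfl : y = Submodule.inclusion hVT v := Subtype.ext hy
    exact h.symm
  rw [hgraph]
  exact hT.preimage (continuous_subtype_val.prodMap continuous_id)

end ClosedGraph

section Adjoint

variable {𝕜 E F : Type*} [RCLike 𝕜]
  [NormedAddCommGroup E] [InnerProductSpace 𝕜 E] [CompleteSpace E]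
  [NormedAddCommGroup F] [InnerProductSpace 𝕜 F]

theorem orthogonalProjectionOnto_apply_eq_adjoint {A : E →ₗ.[𝕜] F}
    (hA : Dense (A.domain : Set E)) {V : Submodule 𝕜 F} [CompleteSpace V]
    (hVA : V ≤ A.adjoint.domain) (S : V →L[𝕜] E)
    (hS : ∀ v, S v = A.adjoint (Submodule.inclusion hVA v)) (y : A.domain) :
    V.orthogonalProjectionOnto (A y) = S.adjoint y := by
  refine ext_inner_right 𝕜 fun v => ?_
  rw [ContinuousLinearMap.adjoint_inner_left, hS,
    Submodule.inner_orthogonalProjectionOnto_eq_of_mem_right,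
    ← (adjoint_isFormalAdjoint hA).symm y (Submodule.inclusion hVA v)]
  rfl

theorem norm_orthogonalProjectionOnto_apply_le {A : E →ₗ.[𝕜] F}
    (hA : Dense (A.domain : Set E)) {V : Submodule 𝕜 F} [CompleteSpace V]
    (hVA : V ≤ A.adjoint.domain) (S : V →L[𝕜] E)
    (hS : ∀ v, S v = A.adjoint (Submodule.inclusion hVA v)) (y : A.domain) :
    ‖V.orthogonalProjectionOnto (A y)‖ ≤ ‖S‖ * ‖(y : E)‖ := by
  rw [orthogonalProjectionOnto_apply_eq_adjoint hA hVA S hS,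
    ← LinearIsometryEquiv.norm_map ContinuousLinearMap.adjoint S]
  exact S.adjoint.le_opNorm _

theorem isFormalAdjoint_self_of_eq_adjoint_comp [CompleteSpace F] {L : F →L[𝕜] F}
    (hL : IsSelfAdjoint L) {A : E →ₗ.[𝕜] F} (hA : Dense (A.domain : Set E)) {T : E →ₗ.[𝕜] E}
    (hT : ∀ y : T.domain, ∃ (hy : (y : E) ∈ A.domain) (h : L (A ⟨y, hy⟩) ∈ A.adjoint.domain),
      T y = A.adjoint ⟨L (A ⟨y, hy⟩), h⟩) :
    T.IsFormalAdjoint T := by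
  intro u v
  obtain ⟨hu, hLu, hTu⟩ := hT u
  obtain ⟨hv, hLv, hTv⟩ := hT v
  rw [hTu, hTv, adjoint_isFormalAdjoint hA ⟨_, hLu⟩ ⟨v, hv⟩]
  exact (hL.isSymmetric _ _).trans ((adjoint_isFormalAdjoint hA).symm ⟨u, hu⟩ ⟨_, hLv⟩)

theorem isSelfAdjoint_of_surjective_add_smul [CompleteSpace F] {T : F →ₗ.[𝕜] F}
    (hT : T.IsFormalAdjoint T) (μ : ℝ)
    (hsurj : ∀ f, ∃ v : T.domain, T v + (μ : 𝕜) • (v : F) = f) : IsSelfAdjoint T := by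
  have hshift : ∀ u v : T.domain,
      inner 𝕜 (T u + (μ : 𝕜) • (u : F)) v = inner 𝕜 (u : F) (T v + (μ : 𝕜) • (v : F)) := by
    intro u v
    rw [inner_add_left, inner_add_right, hT, inner_smul_left, inner_smul_right,
      RCLike.conj_ofReal]
  have hperp_range :
      ∀ x : F, (∀ w : T.domain, inner 𝕜 x (T w + (μ : 𝕜) • (w : F)) = 0) → x = 0 := by
    intro x hx
    obtain ⟨w, hw⟩ := hsurj x
    simpa [hw] using hx w
  have hdense : Dense (T.domain : Set F) := by
    refine Submodule.dense_iff_topologicalClosure_eq_top.2 <|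
      Submodule.topologicalClosure_eq_top_iff.2 <| (Submodule.eq_bot_iff _).2 fun x hx => ?_
    obtain ⟨v, rfl⟩ := hsurj x
    have hv : (v : F) = 0 := hperp_range v fun w => by
      rw [← hshift, Submodule.inner_left_of_mem_orthogonal w.2 hx]
    simp [show v = 0 from Subtype.ext hv]
  have hdomain : T.adjoint.domain ≤ T.domain := by
    intro u hu
    obtain ⟨v, hv⟩ := hsurj (T.adjoint ⟨u, hu⟩ + (μ : 𝕜) • u)
    suffices u - v = 0 by rw [sub_eq_zero.1 this]; exact v.2
    refine hperp_range _ fun w => ?_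
    rw [inner_sub_left, ← hshift, hv, inner_add_right, inner_add_left, inner_smul_right,
      inner_smul_left, RCLike.conj_ofReal, ← adjoint_isFormalAdjoint hdense ⟨u, hu⟩ w, sub_self]
  have hle := hT.le_adjoint hdense
  exact (eq_of_le_of_domain_eq hle (le_antisymm hle.1 hdomain)).symm

end Adjoint

section Real

variable {X Y : Type*} [NormedAddCommGroup X] [InnerProductSpace ℝ X] [CompleteSpace X]
  [NormedAddCommGroup Y] [InnerProductSpace ℝ Y] [CompleteSpace Y]

theorem exists_garding_inequality {A : Y →ₗ.[ℝ] X} (hA : Dense (A.domain : Set Y))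
    (L : X →L[ℝ] X) {δ : ℝ} (hδ : 0 < δ) {K : Submodule ℝ X} (hK : _root_.IsClosed (K : Set X))
    (hcoer : ∀ x ∈ K, δ * ‖x‖ ^ 2 ≤ ⟪L x, x⟫) (hKA : Kᗮ ≤ A.adjoint.domain) :
    ∃ ε > 0, ∃ μ : ℝ, ∀ y : A.domain,
      ε * (‖(y : Y)‖ ^ 2 + ‖A y‖ ^ 2) ≤ ⟪L (A y), A y⟫ + μ * ‖(y : Y)‖ ^ 2 := by
  have : CompleteSpace K := hK.completeSpace_coe
  let S : Kᗮ →L[ℝ] Y :=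
    ⟨_, (adjoint_isClosed hA).continuous_comp_inclusion K.isClosed_orthogonal hKA⟩
  refine ⟨min (δ / 2) 1, by positivity, (δ / 2 + ‖L‖ + 2 * ‖L‖ ^ 2 / δ) * ‖S‖ ^ 2 + 1,
    fun y => ?_⟩
  have hsplit := L.half_mul_norm_sq_le_inner_map_self_add hδ hcoer (A y)
  have hproj : ‖Kᗮ.orthogonalProjectionOnto (A y)‖ ^ 2 ≤ ‖S‖ ^ 2 * ‖(y : Y)‖ ^ 2 := by
    rw [← mul_pow]
    gcongr
    exact norm_orthogonalProjectionOnto_apply_le hA hKA S (fun _ => rfl) y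
  have hmin := mul_le_mul_of_nonneg_right (min_le_left (δ / 2) 1) (sq_nonneg ‖A y‖)
  have hmin' := mul_le_mul_of_nonneg_right (min_le_right (δ / 2) 1) (sq_nonneg ‖(y : Y)‖)
  have hC : 0 ≤ δ / 2 + ‖L‖ + 2 * ‖L‖ ^ 2 / δ := by positivity
  linear_combination hmin + hmin' + hsplit + mul_le_mul_of_nonneg_left hproj hC

theorem exists_adjoint_comp_add_smul_eq {A : Y →ₗ.[ℝ] X} (hA : Dense (A.domain : Set Y))
    (hAclosed : A.IsClosed) (L : X →L[ℝ] X) {ε μ : ℝ} (hε : 0 < ε)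
    (hcoer : ∀ y : A.domain, ε * (‖(y : Y)‖ ^ 2 + ‖A y‖ ^ 2) ≤ ⟪L (A y), A y⟫ + μ * ‖(y : Y)‖ ^ 2)
    (f : Y) :
    ∃ (u : A.domain) (hu : L (A u) ∈ A.adjoint.domain),
      A.adjoint ⟨L (A u), hu⟩ + μ • (u : Y) = f := by
  let e := WithLp.prodContinuousLinearEquiv 2 ℝ Y X
  let W : Submodule ℝ (WithLp 2 (Y × X)) := A.graph.comap (e : WithLp 2 (Y × X) →ₗ[ℝ] Y × X)
  have : CompleteSpace W := (hAclosed.preimage e.continuous).completeSpace_coe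
  have hmem : ∀ w : W, ∃ y : A.domain,
      (y : Y) = (w : WithLp 2 (Y × X)).fst ∧ A y = (w : WithLp 2 (Y × X)).snd :=
    fun w => A.mem_graph_iff.1 w.2
  have hgraph : ∀ y : A.domain, ∃ w : W,
      (w : WithLp 2 (Y × X)).fst = y ∧ (w : WithLp 2 (Y × X)).snd = A y :=
    fun y => ⟨⟨WithLp.toLp 2 ((y : Y), A y), A.mem_graph y⟩, rfl, rfl⟩
  obtain ⟨u, hu⟩ := exists_forall_inner_map_add_eq_inner_of_coercive
    (WithLp.fstL 2 ℝ Y X ∘L W.subtypeL) (WithLp.sndL 2 ℝ Y X ∘L W.subtypeL) L hε (fun w => by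
      obtain ⟨y, hy, hAy⟩ := hmem w
      have := hcoer y
      rw [hy, hAy, ← WithLp.prod_norm_sq_eq_of_L2] at this
      simpa using this) f
  obtain ⟨y, hy, hAy⟩ := hmem u
  have hweak : ∀ z : A.domain, ⟪f - μ • (y : Y), z⟫ = ⟪L (A y), A z⟫ := by
    intro z
    obtain ⟨w, hwz, hwAz⟩ := hgraph z
    have := hu w
    simp only [ContinuousLinearMap.comp_apply, Submodule.subtypeL_apply, WithLp.fstL_apply,
      WithLp.sndL_apply, hwz, hwAz, ← hy, ← hAy] at this
    rw [inner_sub_left, real_inner_smul_left, ← this]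
    ring
  have hdom : L (A y) ∈ A.adjoint.domain := mem_adjoint_domain_of_exists _ ⟨_, hweak⟩
  exact ⟨y, hdom, by rw [adjoint_apply_eq hA ⟨_, hdom⟩ hweak, sub_add_cancel]⟩

end Real

end LinearPMap

theorem adjoint_comp_selfAdjoint_comp_isSelfAdjoint_general
    {X Y : Type*} [NormedAddCommGroup X] [InnerProductSpace ℝ X] [CompleteSpace X]
    [NormedAddCommGroup Y] [InnerProductSpace ℝ Y] [CompleteSpace Y]
    (L : X →L[ℝ] X) (hL : IsSelfAdjoint L)
    (A : Y →ₗ.[ℝ] X)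
    (hAdense : Dense (A.domain : Set Y))
    (hAclosed : A.IsClosed)
    (δ : ℝ) (hδ : 0 < δ)
    (Xp : Submodule ℝ X) (hXpClosed : IsClosed (Xp : Set X))
    (hcoer : ∀ x ∈ Xp, δ * ‖x‖ ^ 2 ≤ ⟪L x, x⟫)
    (hperp : (Xpᗮ : Set X) ⊆ (A.adjoint.domain : Set X))
    (T : Y →ₗ.[ℝ] Y)
    (hTdom : ∀ y : Y, y ∈ T.domain ↔
      ∃ hy : y ∈ A.domain, L (A ⟨y, hy⟩) ∈ A.adjoint.domain)
    (hTval : ∀ (y : T.domain) (hy : (y : Y) ∈ A.domain)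
      (hLy : L (A ⟨(y : Y), hy⟩) ∈ A.adjoint.domain),
      T y = A.adjoint ⟨L (A ⟨(y : Y), hy⟩), hLy⟩) :
    T.adjoint = T := by
  have hsym : T.IsFormalAdjoint T := LinearPMap.isFormalAdjoint_self_of_eq_adjoint_comp hL hAdense
    fun y => let ⟨hy, hLy⟩ := (hTdom y).1 y.2; ⟨hy, hLy, hTval y hy hLy⟩
  obtain ⟨ε, hε, μ, hgarding⟩ :=
    LinearPMap.exists_garding_inequality hAdense L hδ hXpClosed hcoer hperp
  refine LinearPMap.isSelfAdjoint_of_surjective_add_smul hsym μ fun f => ?_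
  obtain ⟨u, hLu, hu⟩ := LinearPMap.exists_adjoint_comp_add_smul_eq hAdense hAclosed L hε hgarding f
  have huT : (u : Y) ∈ T.domain := (hTdom u).2 ⟨u.2, hLu⟩
  exact ⟨⟨u, huT⟩, by rw [hTval ⟨u, huT⟩ u.2 hLu]; exact hu⟩

/-- Let `X, Y` be real Hilbert spaces, `L : X → X` a bounded
self-adjoint operator, and `A : D(A) ⊂ Y → X` a densely defined closed operator whose
adjoint `A*` is also densely defined. Suppose there exist `δ > 0` and a closed subspace
`X₊ ⊂ X` such that `⟪Lx, x⟫ ≥ δ‖x‖²` for all `x ∈ X₊` and `X₊ᗮ ⊆ D(A*)`. Then the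
operator `A*LA`, defined on the natural domain `{y ∈ D(A) : L(Ay) ∈ D(A*)}` by
`y ↦ A*(L(Ay))`, is self-adjoint on `Y`. -/
theorem adjoint_comp_selfAdjoint_comp_isSelfAdjoint
    {X Y : Type*} [NormedAddCommGroup X] [InnerProductSpace ℝ X] [CompleteSpace X]
    [NormedAddCommGroup Y] [InnerProductSpace ℝ Y] [CompleteSpace Y]
    (L : X →L[ℝ] X) (hL : IsSelfAdjoint L)
    (A : Y →ₗ.[ℝ] X)
    (hAdense : Dense (A.domain : Set Y))
    (hAclosed : A.IsClosed)
    (hAadjDense : Dense ((A.adjoint).domain : Set X))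
    (δ : ℝ) (hδ : 0 < δ)
    (Xp : Submodule ℝ X) (hXpClosed : IsClosed (Xp : Set X))
    (hcoer : ∀ x ∈ Xp, δ * ‖x‖ ^ 2 ≤ ⟪L x, x⟫)
    (hperp : (Xpᗮ : Set X) ⊆ (A.adjoint.domain : Set X))
    (T : Y →ₗ.[ℝ] Y)
    (hTdom : ∀ y : Y, y ∈ T.domain ↔
      ∃ hy : y ∈ A.domain, L (A ⟨y, hy⟩) ∈ A.adjoint.domain)
    (hTval : ∀ (y : T.domain) (hy : (y : Y) ∈ A.domain)
      (hLy : L (A ⟨(y : Y), hy⟩) ∈ A.adjoint.domain),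
      T y = A.adjoint ⟨L (A ⟨(y : Y), hy⟩), hLy⟩) :
    T.adjoint = T :=
  adjoint_comp_selfAdjoint_comp_isSelfAdjoint_general L hL A hAdense hAclosed δ hδ Xp hXpClosed
    hcoer hperp T hTdom hTval
end

section
/- Let X be a Hilbert space and L: X → X a bounded self-adjoint operator with δ > 0 and a closed subspace X₊ ⊂ X on which ⟨Lx,x⟩ ≥ δ‖x‖². Let X₁ = {x ∈ X : ⟨Lx, x'⟩ = 0 for all x' ∈ X₊}. Then X = X₊ ⊕ X₁ (direct sum of closed subspaces), and if P₊, P₁ denote the associated projections, then P₁*LP₊ = P₊*LP₁ = 0, so L = P₊*LP₊ + P₁*LP₁ with P₊*LP₊ ≥ 0 on X. -/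
open scoped RealInnerProductSpace

/-- Let `X` be a Hilbert space and `L : X → X` a bounded self-adjoint
operator such that `⟪Lx, x⟫ ≥ δ‖x‖²` on a closed subspace `X₊` with `δ > 0`. Let
`X₁ = {x : ⟪Lx, x'⟫ = 0 ∀ x' ∈ X₊}`. Then `X = X₊ ⊕ X₁` (direct sum of closed subspaces),
and the associated projections `P₊, P₁` satisfy `P₁* L P₊ = P₊* L P₁ = 0`, so
`L = P₊* L P₊ + P₁* L P₁` with `P₊* L P₊ ≥ 0` on `X`. -/
theorem L_orthogonal_decomposition_of_coercive_subspace
    {X : Type*} [NormedAddCommGroup X] [InnerProductSpace ℝ X] [CompleteSpace X]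
    (L : X →L[ℝ] X) (hL : IsSelfAdjoint L)
    (δ : ℝ) (hδ : 0 < δ)
    (Xp : Submodule ℝ X) (hXpClosed : IsClosed (Xp : Set X))
    (hcoer : ∀ x ∈ Xp, δ * ‖x‖ ^ 2 ≤ ⟪L x, x⟫)
    (X1 : Submodule ℝ X)
    (hX1 : ∀ x : X, x ∈ X1 ↔ ∀ x' ∈ Xp, ⟪L x, x'⟫ = 0) :
    IsClosed (X1 : Set X) ∧ IsCompl Xp X1 ∧
    ∃ Pp P1 : X →L[ℝ] X,
      (∀ x : X, Pp x ∈ Xp) ∧ (∀ x : X, P1 x ∈ X1) ∧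
      (∀ x : X, Pp x + P1 x = x) ∧
      (∀ x ∈ Xp, Pp x = x) ∧ (∀ x ∈ X1, P1 x = x) ∧
      (ContinuousLinearMap.adjoint P1) ∘L (L ∘L Pp) = 0 ∧
      (ContinuousLinearMap.adjoint Pp) ∘L (L ∘L P1) = 0 ∧
      L = (ContinuousLinearMap.adjoint Pp) ∘L (L ∘L Pp)
          + (ContinuousLinearMap.adjoint P1) ∘L (L ∘L P1) ∧
      (∀ x : X, 0 ≤ ⟪((ContinuousLinearMap.adjoint Pp) ∘L (L ∘L Pp)) x, x⟫) := by
  haveI : CompleteSpace Xp := hXpClosed.completeSpace_coe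
  have hsym : ∀ x y : X, ⟪L x, y⟫ = ⟪x, L y⟫ := hL.isSymmetric
  -- uniqueness
  have uniq : ∀ u u' : X, u ∈ Xp → u' ∈ Xp →
      (∀ v ∈ Xp, ⟪L u, v⟫ = ⟪L u', v⟫) → u = u' := by
    intro u u' hu hu' h
    have hd : u - u' ∈ Xp := Xp.sub_mem hu hu'
    have h0 : ⟪L (u - u'), u - u'⟫ = 0 := by
      rw [map_sub, inner_sub_left, h _ hd, sub_self]
    have hc := hcoer _ hd
    rw [h0] at hc
    have hn : ‖u - u'‖ ^ 2 = 0 := by nlinarith [sq_nonneg ‖u - u'‖]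
    rw [pow_eq_zero_iff (two_ne_zero), norm_eq_zero, sub_eq_zero] at hn
    exact hn
  -- existence via Lax-Milgram
  have exist : ∀ x : X, ∃ u, u ∈ Xp ∧ ∀ v ∈ Xp, ⟪L u, v⟫ = ⟪L x, v⟫ := by
    set ι : Xp →L[ℝ] X := Xp.subtypeL with hι
    set B : Xp →L[ℝ] Xp →L[ℝ] ℝ :=
      ((ContinuousLinearMap.compL ℝ Xp X ℝ).flip ι) ∘L ((innerSL ℝ) ∘L (L ∘L ι)) with hB
    have hBapp : ∀ u v : Xp, B u v = ⟪L (u : X), (v : X)⟫ := fun u v => rfl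
    have hcoB : IsCoercive B := by
      refine ⟨δ, hδ, fun u => ?_⟩
      rw [hBapp]
      calc δ * ‖u‖ * ‖u‖ = δ * ‖(u : X)‖ ^ 2 := by rw [Submodule.norm_coe]; ring
        _ ≤ _ := hcoer _ u.2
    intro x
    set f : Xp →L[ℝ] ℝ := (innerSL ℝ (L x)) ∘L ι with hf
    set y : Xp := (InnerProductSpace.toDual ℝ Xp).symm f with hy
    set u : Xp := hcoB.continuousLinearEquivOfBilin.symm y with hu
    refine ⟨u, u.2, fun v hv => ?_⟩
    have h1 : ⟪hcoB.continuousLinearEquivOfBilin u, (⟨v, hv⟩ : Xp)⟫ = B u ⟨v, hv⟩ :=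
      hcoB.continuousLinearEquivOfBilin_apply u ⟨v, hv⟩
    rw [hu, hcoB.continuousLinearEquivOfBilin.apply_symm_apply] at h1
    have h2 : ⟪y, (⟨v, hv⟩ : Xp)⟫ = f ⟨v, hv⟩ := InnerProductSpace.toDual_symm_apply
    rw [hBapp] at h1
    rw [← h1, h2]
    rfl
  choose p hp1 hp2 using exist
  -- linearity
  have hadd : ∀ x y : X, p (x + y) = p x + p y := by
    intro x y
    refine uniq _ _ (hp1 _) (Xp.add_mem (hp1 x) (hp1 y)) fun v hv => ?_
    rw [hp2 _ _ hv, map_add, map_add, inner_add_left, inner_add_left,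
      hp2 _ _ hv, hp2 _ _ hv]
  have hsmul : ∀ (c : ℝ) (x : X), p (c • x) = c • p x := by
    intro c x
    refine uniq _ _ (hp1 _) (Xp.smul_mem c (hp1 x)) fun v hv => ?_
    rw [hp2 _ _ hv, map_smul, map_smul, real_inner_smul_left, real_inner_smul_left,
      hp2 _ _ hv]
  have hbound : ∀ x : X, ‖p x‖ ≤ (‖L‖ / δ) * ‖x‖ := by
    intro x
    have h1 : δ * ‖p x‖ ^ 2 ≤ ⟪L (p x), p x⟫ := hcoer _ (hp1 x)
    have h2 : ⟪L (p x), p x⟫ = ⟪L x, p x⟫ := hp2 _ _ (hp1 x)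
    have h3 : ⟪L x, p x⟫ ≤ ‖L x‖ * ‖p x‖ := real_inner_le_norm _ _
    have h4 : ‖L x‖ ≤ ‖L‖ * ‖x‖ := L.le_opNorm x
    have h5 : (0 : ℝ) ≤ ‖p x‖ := norm_nonneg _
    have h6 : (0 : ℝ) ≤ ‖x‖ := norm_nonneg _
    rcases eq_or_lt_of_le h5 with h | h
    · rw [← h]
      positivity
    · rw [div_mul_eq_mul_div, le_div_iff₀ hδ]
      nlinarith
  let Plin : X →ₗ[ℝ] X := { toFun := p, map_add' := hadd, map_smul' := hsmul }
  let Pp : X →L[ℝ] X := Plin.mkContinuous (‖L‖ / δ) hbound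
  let P1 : X →L[ℝ] X := ContinuousLinearMap.id ℝ X - Pp
  have hPp : ∀ x : X, Pp x = p x := fun x => rfl
  have hP1 : ∀ x : X, P1 x = x - p x := fun x => rfl
  have hPpmem : ∀ x : X, Pp x ∈ Xp := fun x => hp1 x
  have hP1mem : ∀ x : X, P1 x ∈ X1 := by
    intro x
    rw [hP1, hX1]
    intro x' hx'
    rw [map_sub, inner_sub_left, hp2 _ _ hx', sub_self]
  have hfix : ∀ x ∈ Xp, Pp x = x := by
    intro x hx
    exact uniq _ _ (hp1 x) hx (fun v hv => hp2 _ _ hv)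
  have hfix1 : ∀ x ∈ X1, P1 x = x := by
    intro x hx
    have : p x = 0 := by
      refine uniq _ _ (hp1 x) Xp.zero_mem fun v hv => ?_
      rw [hp2 _ _ hv, (hX1 x).mp hx _ hv, map_zero, inner_zero_left]
    rw [hP1, this, sub_zero]
  -- key orthogonality
  have key : ∀ a ∈ Xp, ∀ b ∈ X1, ⟪L a, b⟫ = 0 := by
    intro a ha b hb
    rw [hsym, real_inner_comm]
    exact (hX1 b).mp hb _ ha
  have key' : ∀ b ∈ X1, ∀ a ∈ Xp, ⟪L b, a⟫ = 0 := fun b hb a ha => (hX1 b).mp hb _ ha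
  -- X1 closed
  have hX1closed : IsClosed (X1 : Set X) := by
    have : (X1 : Set X) = ⋂ x' ∈ (Xp : Set X), {x | ⟪L x, x'⟫ = 0} := by
      ext x; simp [hX1]
    rw [this]
    exact isClosed_biInter fun x' _ =>
      isClosed_eq (Continuous.inner (L.continuous) continuous_const) continuous_const
  refine ⟨hX1closed, ⟨?_, ?_⟩, Pp, P1, hPpmem, hP1mem, fun x => by rw [hP1, hPp]; abel,
    hfix, hfix1, ?_, ?_, ?_, ?_⟩
  · -- disjoint
    rw [Submodule.disjoint_def]
    intro x hxp hx1
    have h0 : ⟪L x, x⟫ = 0 := (hX1 x).mp hx1 _ hxp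
    have hc := hcoer _ hxp
    rw [h0] at hc
    have hn : ‖x‖ ^ 2 = 0 := by nlinarith [sq_nonneg ‖x‖]
    rwa [pow_eq_zero_iff (two_ne_zero), norm_eq_zero] at hn
  · -- codisjoint
    rw [codisjoint_iff, eq_top_iff]
    intro x _
    rw [Submodule.mem_sup]
    exact ⟨Pp x, hPpmem x, P1 x, hP1mem x, by rw [hP1, hPp]; abel⟩
  · ext x
    refine ext_inner_right ℝ fun y => ?_
    simp only [ContinuousLinearMap.comp_apply, ContinuousLinearMap.adjoint_inner_left,
      ContinuousLinearMap.zero_apply, inner_zero_left]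
    exact key _ (hPpmem x) _ (hP1mem y)
  · ext x
    refine ext_inner_right ℝ fun y => ?_
    simp only [ContinuousLinearMap.comp_apply, ContinuousLinearMap.adjoint_inner_left,
      ContinuousLinearMap.zero_apply, inner_zero_left]
    exact key' _ (hP1mem x) _ (hPpmem y)
  · ext x
    refine ext_inner_right ℝ fun y => ?_
    simp only [ContinuousLinearMap.add_apply, ContinuousLinearMap.comp_apply,
      ContinuousLinearMap.adjoint_inner_left, inner_add_left]
    have hx : x = Pp x + P1 x := by rw [hP1, hPp]; abel
    have hy : y = Pp y + P1 y := by rw [hP1, hPp]; abel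
    conv_lhs => rw [hx, hy]
    rw [map_add, inner_add_left, inner_add_right, inner_add_right,
      key _ (hPpmem x) _ (hP1mem y), key' _ (hP1mem x) _ (hPpmem y)]
    ring
  · intro x
    simp only [ContinuousLinearMap.comp_apply, ContinuousLinearMap.adjoint_inner_left]
    have := hcoer _ (hPpmem x)
    nlinarith [sq_nonneg ‖Pp x‖]
end

section
/- (Hardy inequality, k > 1) Let k > 1 be a real number and let g ∈ C¹((0,1]) satisfy ∫₀¹ s^k (g(s)² + g'(s)²) ds < ∞. Then there exists a constant C depending only on k such that ∫₀¹ s^{k-2} g(s)² ds ≤ C ∫₀¹ s^k (g(s)² + g'(s)²) ds. -/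
/-!
The weight `φ(s) = s ^ (k - 1) * (1 - s)` satisfies `φ' = (k - 1) s ^ (k - 2) - k s ^ (k - 1)`, and
two applications of AM-GM give
`(φ g²)' = φ' g² + 2 φ g g' ≥ (k - 1) / 2 · s ^ (k - 2) g² - M s ^ k (g² + g'²)`
with `M = (k² + 4) / (k - 1)`; this is where `k > 1` is needed. As `φ(1) = 0` and `φ(ε) ≥ 0`,
integrating over `[ε, 1]` leaves no boundary term and yields the inequality on `[ε, 1]` with
`C = 2 M / (k - 1)`. Monotone convergence as `ε → 0` gives it on `(0, 1]`.
-/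

open Set MeasureTheory
open scoped ENNReal

theorem hardy_weight_deriv_lower_bound_poly {k x : ℝ} (hk : 1 < k) (hx0 : 0 ≤ x) (hx2 : x ≤ 2)
    (G D : ℝ) :
    (k - 1) / 2 * G ^ 2 ≤ ((k - 1) * (1 - x) - x) * G ^ 2 + 2 * (x * (1 - x)) * G * D
      + (k ^ 2 + 4) / (k - 1) * (x ^ 2 * (G ^ 2 + D ^ 2)) := by
  have hk1 : 0 < k - 1 := by linarith
  have sos : 4 * (k - 1) * (((k - 1) * (1 - x) - x) * G ^ 2 + 2 * (x * (1 - x)) * G * D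
      + (k ^ 2 + 4) / (k - 1) * (x ^ 2 * (G ^ 2 + D ^ 2)) - (k - 1) / 2 * G ^ 2) =
      ((k - 1) * G - 2 * k * x * G) ^ 2 + ((k - 1) * G + 4 * (1 - x) * x * D) ^ 2
        + 16 * (x * (2 - x)) * (x * D) ^ 2 + 16 * (x * G) ^ 2 + 4 * (k * x * D) ^ 2 := by
    field_simp
    ring
  have : 0 ≤ 16 * (x * (2 - x)) * (x * D) ^ 2 := by
    have : 0 ≤ 2 - x := by linarith
    positivity
  nlinarith [sq_nonneg ((k - 1) * G - 2 * k * x * G), sq_nonneg ((k - 1) * G + 4 * (1 - x) * x * D),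
    sq_nonneg (x * G), sq_nonneg (k * x * D)]

theorem hardy_weight_deriv_lower_bound {k x : ℝ} (hk : 1 < k) (hx0 : 0 < x) (hx2 : x ≤ 2)
    (G D : ℝ) :
    (k - 1) / 2 * (x ^ (k - 2) * G ^ 2) ≤
      ((k - 1) * x ^ (k - 2) * (1 - x) - x ^ (k - 1)) * G ^ 2 + 2 * (x ^ (k - 1) * (1 - x)) * G * D
        + (k ^ 2 + 4) / (k - 1) * (x ^ k * (G ^ 2 + D ^ 2)) := by
  have h1 : x ^ (k - 1) = x ^ (k - 2) * x := by
    rw [← Real.rpow_add_one hx0.ne']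
    ring_nf
  have h2 : x ^ k = x ^ (k - 2) * x ^ 2 := by
    rw [← Real.rpow_add_natCast hx0.ne']
    push_cast
    ring_nf
  rw [h1, h2]
  have := mul_le_mul_of_nonneg_left (hardy_weight_deriv_lower_bound_poly hk hx0.le hx2 G D)
    (Real.rpow_nonneg hx0.le (k - 2))
  linarith

theorem hasDerivAt_hardy_weight_mul_sq {k x : ℝ} (hx : x ≠ 0) {g : ℝ → ℝ} {g' : ℝ}
    (hg : HasDerivAt g g' x) :
    HasDerivAt (fun y => y ^ (k - 1) * (1 - y) * g y ^ 2)
      (((k - 1) * x ^ (k - 2) * (1 - x) - x ^ (k - 1)) * g x ^ 2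
        + 2 * (x ^ (k - 1) * (1 - x)) * g x * g') x := by
  refine (((Real.hasDerivAt_rpow_const (p := k - 1) (Or.inl hx)).fun_mul
    ((hasDerivAt_id x).const_sub 1)).fun_mul (hg.fun_pow 2)).congr_deriv ?_
  rw [show k - 1 - 1 = k - 2 by ring]
  simp only [id, Nat.cast_ofNat]
  ring

theorem integral_rpow_sub_two_mul_sq_le {k ε : ℝ} (hk : 1 < k) (hε : ε ∈ Ioc 0 1) {g dg : ℝ → ℝ}
    (hg : ∀ x ∈ Icc ε 1, HasDerivAt g (dg x) x) (hdg : ContinuousOn dg (Icc ε 1)) :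
    ∫ x in ε..1, x ^ (k - 2) * g x ^ 2 ≤
      2 * (k ^ 2 + 4) / (k - 1) ^ 2 * ∫ x in ε..1, x ^ k * (g x ^ 2 + dg x ^ 2) := by
  have hk1 : 0 < k - 1 := by linarith
  have hpos : ∀ x ∈ Icc ε 1, 0 < x := fun x hx => hε.1.trans_le hx.1
  have hgc : ContinuousOn g (Icc ε 1) := HasDerivAt.continuousOn hg
  have hrpow (p : ℝ) : ContinuousOn (fun x : ℝ => x ^ p) (Icc ε 1) :=
    continuousOn_id.rpow_const fun x hx => Or.inl (hpos x hx).ne'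
  have hrpow₀ := hrpow (k - 2)
  have hrpow₁ := hrpow (k - 1)
  have hrpow₂ := hrpow k
  set F' : ℝ → ℝ := fun x => ((k - 1) * x ^ (k - 2) * (1 - x) - x ^ (k - 1)) * g x ^ 2
    + 2 * (x ^ (k - 1) * (1 - x)) * g x * dg x
  have hF'int : IntervalIntegrable F' volume ε 1 :=
    ContinuousOn.intervalIntegrable_of_Icc hε.2 (by fun_prop)
  have hAint : IntervalIntegrable (fun x => x ^ (k - 2) * g x ^ 2) volume ε 1 :=
    ContinuousOn.intervalIntegrable_of_Icc hε.2 (by fun_prop)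
  have hBint : IntervalIntegrable (fun x => x ^ k * (g x ^ 2 + dg x ^ 2)) volume ε 1 :=
    ContinuousOn.intervalIntegrable_of_Icc hε.2 (by fun_prop)
  have hF'_nonpos : ∫ x in ε..1, F' x ≤ 0 := by
    rw [intervalIntegral.integral_eq_sub_of_hasDerivAt (fun x hx => hasDerivAt_hardy_weight_mul_sq
      (hpos x (uIcc_of_le hε.2 ▸ hx)).ne' (hg x (uIcc_of_le hε.2 ▸ hx))) hF'int]
    have : 0 ≤ 1 - ε := by linarith [hε.2]
    have := Real.rpow_nonneg hε.1.le (k - 1)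
    simp only [sub_self, mul_zero, zero_mul, zero_sub, neg_nonpos]
    positivity
  have hmono := intervalIntegral.integral_mono_on hε.2 (hAint.const_mul ((k - 1) / 2))
    (hF'int.add (hBint.const_mul ((k ^ 2 + 4) / (k - 1))))
    fun x hx => hardy_weight_deriv_lower_bound hk (hpos x hx) (by linarith [hx.2]) (g x) (dg x)
  rw [intervalIntegral.integral_const_mul, intervalIntegral.integral_add hF'int
    (hBint.const_mul _), intervalIntegral.integral_const_mul] at hmono
  calc ∫ x in ε..1, x ^ (k - 2) * g x ^ 2
      = 2 / (k - 1) * ((k - 1) / 2 * ∫ x in ε..1, x ^ (k - 2) * g x ^ 2) := by field_simp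
    _ ≤ 2 / (k - 1) * ((k ^ 2 + 4) / (k - 1) * ∫ x in ε..1, x ^ k * (g x ^ 2 + dg x ^ 2)) :=
      mul_le_mul_of_nonneg_left (by linarith) (by positivity)
    _ = _ := by field_simp

theorem ofReal_intervalIntegral_eq_lintegral_Ioc {f : ℝ → ℝ} {a b : ℝ} (hab : a ≤ b)
    (hf : IntervalIntegrable f volume a b) (hf0 : ∀ x ∈ Ioc a b, 0 ≤ f x) :
    ENNReal.ofReal (∫ x in a..b, f x) = ∫⁻ x in Ioc a b, ENNReal.ofReal (f x) := by
  rw [intervalIntegral.integral_of_le hab]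
  exact ofReal_integral_eq_lintegral_ofReal ((intervalIntegrable_iff_integrableOn_Ioc_of_le hab).1 hf)
    (ae_restrict_of_forall_mem measurableSet_Ioc hf0)

theorem lintegral_Ioc_rpow_sub_two_mul_sq_le {k ε : ℝ} (hk : 1 < k) (hε : ε ∈ Ioc 0 1)
    {g dg : ℝ → ℝ} (hg : ∀ x ∈ Icc ε 1, HasDerivAt g (dg x) x) (hdg : ContinuousOn dg (Icc ε 1)) :
    ∫⁻ x in Ioc ε 1, ENNReal.ofReal (x ^ (k - 2) * g x ^ 2) ≤
      ENNReal.ofReal (2 * (k ^ 2 + 4) / (k - 1) ^ 2) *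
        ∫⁻ x in Ioc ε 1, ENNReal.ofReal (x ^ k * (g x ^ 2 + dg x ^ 2)) := by
  have hpos : ∀ x ∈ Icc ε 1, 0 < x := fun x hx => hε.1.trans_le hx.1
  have hgc : ContinuousOn g (Icc ε 1) := HasDerivAt.continuousOn hg
  have hrpow₀ : ContinuousOn (fun x : ℝ => x ^ (k - 2)) (Icc ε 1) :=
    continuousOn_id.rpow_const fun x hx => Or.inl (hpos x hx).ne'
  have hrpow₂ : ContinuousOn (fun x : ℝ => x ^ k) (Icc ε 1) :=
    continuousOn_id.rpow_const fun x hx => Or.inl (hpos x hx).ne'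
  rw [← ofReal_intervalIntegral_eq_lintegral_Ioc hε.2
      (ContinuousOn.intervalIntegrable_of_Icc hε.2 (by fun_prop))
      fun x hx => by have := Real.rpow_nonneg (hε.1.trans hx.1).le (k - 2); positivity,
    ← ofReal_intervalIntegral_eq_lintegral_Ioc hε.2
      (ContinuousOn.intervalIntegrable_of_Icc hε.2 (by fun_prop))
      fun x hx => by have := Real.rpow_nonneg (hε.1.trans hx.1).le k; positivity,
    ← ENNReal.ofReal_mul (div_pos (by positivity) (pow_pos (sub_pos.2 hk) 2)).le]
  exact ENNReal.ofReal_le_ofReal (integral_rpow_sub_two_mul_sq_le hk hε hg hdg)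

theorem lintegral_Ioc_le_of_forall_lintegral_Ioc_le {f : ℝ → ℝ≥0∞} {a b : ℝ} {c : ℝ≥0∞}
    (h : ∀ ε ∈ Ioc a b, ∫⁻ x in Ioc ε b, f x ≤ c) : ∫⁻ x in Ioc a b, f x ≤ c := by
  rcases le_or_gt b a with hba | hab
  · simp [Ioc_eq_empty_of_le hba]
  set ε : ℕ → ℝ := fun n => min (a + 1 / (n + 1)) b
  have hε : ∀ n, ε n ∈ Ioc a b := fun n =>
    ⟨lt_min (lt_add_of_pos_right a Nat.one_div_pos_of_nat) hab, min_le_right _ _⟩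
  have hε_anti : Antitone ε := fun n m hnm =>
    min_le_min_right b (add_le_add_right (Nat.one_div_le_one_div hnm) a)
  have hU : Ioc a b = ⋃ n, Ioc (ε n) b := by
    ext x
    refine ⟨fun hx => ?_, fun hx => ?_⟩
    · obtain ⟨n, hn⟩ := exists_nat_one_div_lt (sub_pos.2 hx.1)
      exact mem_iUnion.2 ⟨n, (min_le_left _ _).trans_lt (by linarith), hx.2⟩
    · obtain ⟨n, hn⟩ := mem_iUnion.1 hx
      exact ⟨(hε n).1.trans hn.1, hn.2⟩
  rw [hU, setLIntegral_iUnion_of_directed _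
    (Monotone.directed_le fun n m hnm => Ioc_subset_Ioc_left (hε_anti hnm))]
  exact iSup_le fun n => h (ε n) (hε n)

/-- **Hardy inequality, `k > 1`.** Let `k > 1` and let `g ∈ C¹((0,1])`
satisfy `∫₀¹ s^k (g² + g'²) ds < ∞`. Then there is a constant `C` depending only on `k`
such that `∫₀¹ s^{k-2} g² ds ≤ C ∫₀¹ s^k (g² + g'²) ds`. -/
theorem hardy_inequality_k_gt_one (k : ℝ) (hk : 1 < k) :
    ∃ C : ℝ, 0 < C ∧
      ∀ g dg : ℝ → ℝ,
        (∀ s ∈ Ioc (0 : ℝ) 1, HasDerivAt g (dg s) s) →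
        ContinuousOn dg (Ioc (0 : ℝ) 1) →
        IntegrableOn (fun s => s ^ k * (g s ^ 2 + dg s ^ 2)) (Ioc (0 : ℝ) 1) →
        ∫⁻ s in Ioc (0 : ℝ) 1, ENNReal.ofReal (s ^ (k - 2) * g s ^ 2) ≤
          ENNReal.ofReal C *
            ∫⁻ s in Ioc (0 : ℝ) 1, ENNReal.ofReal (s ^ k * (g s ^ 2 + dg s ^ 2)) := by
  refine ⟨2 * (k ^ 2 + 4) / (k - 1) ^ 2, div_pos (by positivity) (pow_pos (sub_pos.2 hk) 2),
    fun g dg hg hdg _ => lintegral_Ioc_le_of_forall_lintegral_Ioc_le fun ε hε => ?_⟩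
  have hsub : Icc ε 1 ⊆ Ioc 0 1 := fun x hx => ⟨hε.1.trans_le hx.1, hx.2⟩
  calc ∫⁻ s in Ioc ε 1, ENNReal.ofReal (s ^ (k - 2) * g s ^ 2)
      ≤ ENNReal.ofReal (2 * (k ^ 2 + 4) / (k - 1) ^ 2) *
          ∫⁻ s in Ioc ε 1, ENNReal.ofReal (s ^ k * (g s ^ 2 + dg s ^ 2)) :=
        lintegral_Ioc_rpow_sub_two_mul_sq_le hk hε (fun x hx => hg x (hsub hx)) (hdg.mono hsub)
    _ ≤ _ := by
      gcongr
      exact hε.1.le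
end

section
/- (Hardy inequality, k < 1) Let k < 1 and let g ∈ C¹((0,1]) satisfy ∫₀¹ s^k (g(s)² + g'(s)²) ds < ∞. Then g extends continuously to s = 0 (g has a trace g(0)), and there exists C depending only on k such that ∫₀¹ s^{k-2} (g(s) - g(0))² ds ≤ C ∫₀¹ s^k g'(s)² ds. -/
open Set MeasureTheory Filter

open scoped ENNReal

/-! Write `g s - g 0 = ∫₀ˢ g'`. Cauchy–Schwarz against the intermediate weight `t ^ a`,
`a = (k + 1) / 2`, gives `(g s - g 0)² ≤ s ^ (1 - a) / (1 - a) · ∫₀ˢ t ^ a g'²`.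
Integrating against `s ^ (k - 2)` and exchanging the order of integration, the inner integral
`∫ₜ^∞ s ^ (k - 1 - a) ds = t ^ (k - a) / (a - k)` turns the weight `t ^ a` back into `t ^ k`;
each of the two steps costs a factor `2 / (1 - k)`. The same Cauchy–Schwarz estimate with `a = k`
shows that `g'` is integrable near `0`, which gives the trace. -/

theorem ENNReal.ofReal_mul_sq {x : ℝ} (hx : 0 ≤ x) (y : ℝ) :
    ENNReal.ofReal (x * y ^ 2) = ENNReal.ofReal x * ‖y‖ₑ ^ 2 := by
  rw [ENNReal.ofReal_mul hx, ← sq_abs, ENNReal.ofReal_pow (abs_nonneg y),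
    Real.enorm_eq_ofReal_abs]

theorem ENNReal.ofReal_rpow_mul_ofReal_rpow {t : ℝ} (ht : 0 < t) (x y : ℝ) :
    ENNReal.ofReal (t ^ x) * ENNReal.ofReal (t ^ y) = ENNReal.ofReal (t ^ (x + y)) := by
  rw [← ENNReal.ofReal_mul (Real.rpow_nonneg ht.le x), ← Real.rpow_add ht]

theorem sq_lintegral_mul_le_lintegral_sq_mul_lintegral_sq {α : Type*} [MeasurableSpace α]
    {μ : Measure α} {u v : α → ℝ≥0∞} (hu : AEMeasurable u μ) (hv : AEMeasurable v μ) :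
    (∫⁻ x, u x * v x ∂μ) ^ 2 ≤ (∫⁻ x, u x ^ 2 ∂μ) * ∫⁻ x, v x ^ 2 ∂μ := by
  have h := ENNReal.lintegral_mul_le_Lp_mul_Lq μ Real.HolderConjugate.two_two hu hv
  simp only [Pi.mul_apply, ENNReal.rpow_two] at h
  calc _ ≤ ((∫⁻ x, u x ^ 2 ∂μ) ^ (1 / 2 : ℝ) * (∫⁻ x, v x ^ 2 ∂μ) ^ (1 / 2 : ℝ)) ^ 2 := by
        gcongr
    _ = (∫⁻ x, u x ^ 2 ∂μ) * ∫⁻ x, v x ^ 2 ∂μ := by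
      rw [mul_pow, ← ENNReal.rpow_two, ← ENNReal.rpow_two, ← ENNReal.rpow_mul,
        ← ENNReal.rpow_mul]
      norm_num

theorem lintegral_Ioc_rpow {c : ℝ} (hc : -1 < c) {s : ℝ} (hs : 0 ≤ s) :
    ∫⁻ t in Ioc 0 s, ENNReal.ofReal (t ^ c) = ENNReal.ofReal (s ^ (c + 1) / (c + 1)) := by
  rw [← ofReal_integral_eq_lintegral_ofReal
      ((intervalIntegrable_iff_integrableOn_Ioc_of_le hs).1
        (intervalIntegral.intervalIntegrable_rpow' hc))
      ((ae_restrict_mem measurableSet_Ioc).mono fun t ht => Real.rpow_nonneg ht.1.le c),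
    ← intervalIntegral.integral_of_le hs, integral_rpow (Or.inl hc),
    Real.zero_rpow (by linarith), sub_zero]

theorem lintegral_Ioi_rpow {c : ℝ} (hc : c < -1) {t : ℝ} (ht : 0 < t) :
    ∫⁻ s in Ioi t, ENNReal.ofReal (s ^ c) = ENNReal.ofReal (-t ^ (c + 1) / (c + 1)) := by
  rw [← ofReal_integral_eq_lintegral_ofReal (integrableOn_Ioi_rpow_of_lt hc ht)
      ((ae_restrict_mem measurableSet_Ioi).mono fun s hs =>
        Real.rpow_nonneg (ht.trans hs).le c),
    integral_Ioi_rpow_of_lt hc ht]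

theorem sq_lintegral_Ioc_le_rpow_mul_lintegral {a : ℝ} (ha : a < 1) {s : ℝ} (hs : 0 ≤ s)
    {F : ℝ → ℝ≥0∞} (hF : AEMeasurable F (volume.restrict (Ioc 0 s))) :
    (∫⁻ t in Ioc 0 s, F t) ^ 2 ≤
      ENNReal.ofReal (s ^ (1 - a) / (1 - a)) *
        ∫⁻ t in Ioc 0 s, ENNReal.ofReal (t ^ a) * F t ^ 2 := by
  have hsplit : ∀ t ∈ Ioc 0 s,
      F t = ENNReal.ofReal (t ^ (-(a / 2))) * (ENNReal.ofReal (t ^ (a / 2)) * F t) := by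
    intro t ht
    rw [← mul_assoc, ENNReal.ofReal_rpow_mul_ofReal_rpow ht.1, neg_add_cancel, Real.rpow_zero,
      ENNReal.ofReal_one, one_mul]
  have hsq : ∀ t ∈ Ioc 0 s, ∀ e : ℝ,
      ENNReal.ofReal (t ^ (e / 2)) ^ 2 = ENNReal.ofReal (t ^ e) := by
    intro t ht e
    rw [← ENNReal.ofReal_pow (Real.rpow_nonneg ht.1.le _), ← Real.rpow_natCast,
      ← Real.rpow_mul ht.1.le]
    norm_num
  calc (∫⁻ t in Ioc 0 s, F t) ^ 2
      = (∫⁻ t in Ioc 0 s,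
          ENNReal.ofReal (t ^ (-(a / 2))) * (ENNReal.ofReal (t ^ (a / 2)) * F t)) ^ 2 := by
        rw [setLIntegral_congr_fun measurableSet_Ioc hsplit]
    _ ≤ (∫⁻ t in Ioc 0 s, ENNReal.ofReal (t ^ (-(a / 2))) ^ 2) *
          ∫⁻ t in Ioc 0 s, (ENNReal.ofReal (t ^ (a / 2)) * F t) ^ 2 :=
        sq_lintegral_mul_le_lintegral_sq_mul_lintegral_sq (by fun_prop) (by fun_prop)
    _ = ENNReal.ofReal (s ^ (1 - a) / (1 - a)) *
          ∫⁻ t in Ioc 0 s, ENNReal.ofReal (t ^ a) * F t ^ 2 := by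
        have hu : ∫⁻ t in Ioc 0 s, ENNReal.ofReal (t ^ (-(a / 2))) ^ 2 =
            ∫⁻ t in Ioc 0 s, ENNReal.ofReal (t ^ (-a)) :=
          setLIntegral_congr_fun measurableSet_Ioc fun t ht => by rw [← neg_div, hsq t ht]
        have hv : ∫⁻ t in Ioc 0 s, (ENNReal.ofReal (t ^ (a / 2)) * F t) ^ 2 =
            ∫⁻ t in Ioc 0 s, ENNReal.ofReal (t ^ a) * F t ^ 2 :=
          setLIntegral_congr_fun measurableSet_Ioc fun t ht => by rw [mul_pow, hsq t ht]
        rw [hu, hv, lintegral_Ioc_rpow (by linarith) hs, neg_add_eq_sub]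

theorem lintegral_mul_setLIntegral_Iic_eq {α : Type*} [MeasurableSpace α] [TopologicalSpace α]
    [PartialOrder α] [OrderClosedTopology α] [SecondCountableTopology α]
    [OpensMeasurableSpace α]
    {μ : Measure α} [SFinite μ] {φ ψ : α → ℝ≥0∞} (hφ : AEMeasurable φ μ)
    (hψ : AEMeasurable ψ μ) :
    ∫⁻ s, φ s * ∫⁻ t in Iic s, ψ t ∂μ ∂μ =
      ∫⁻ t, ψ t * ∫⁻ s in Ici t, φ s ∂μ ∂μ := by
  set K : α → α → ℝ≥0∞ := fun s t =>
    {p : α × α | p.2 ≤ p.1}.indicator (fun p => φ p.1 * ψ p.2) (s, t)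
  have hK : AEMeasurable (Function.uncurry K) (μ.prod μ) :=
    (hφ.comp_fst.mul hψ.comp_snd).indicator (measurableSet_le measurable_snd measurable_fst)
  have hleft : ∀ s, φ s * ∫⁻ t in Iic s, ψ t ∂μ = ∫⁻ t, K s t ∂μ := fun s => by
    rw [← lintegral_const_mul'' _ hψ.restrict, ← lintegral_indicator measurableSet_Iic]
    rfl
  have hright : ∀ t, ψ t * ∫⁻ s in Ici t, φ s ∂μ = ∫⁻ s, K s t ∂μ := fun t => by
    rw [← lintegral_const_mul'' _ hφ.restrict, ← lintegral_indicator measurableSet_Ici]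
    simp only [K, indicator, mem_Ici, mul_comm (ψ t)]
    rfl
  simp only [hleft, hright]
  exact lintegral_lintegral_swap hK

theorem lintegral_Ioc_rpow_mul_lintegral_Ioc_le {β : ℝ} (hβ : 0 < β) {b : ℝ}
    {ψ : ℝ → ℝ≥0∞} (hψ : AEMeasurable ψ (volume.restrict (Ioc 0 b))) :
    ∫⁻ s in Ioc 0 b, ENNReal.ofReal (s ^ (-β - 1)) * ∫⁻ t in Ioc 0 s, ψ t ≤
      ENNReal.ofReal (1 / β) * ∫⁻ t in Ioc 0 b, ENNReal.ofReal (t ^ (-β)) * ψ t := by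
  set μ := volume.restrict (Ioc (0 : ℝ) b)
  have hinner : ∀ s ∈ Ioc 0 b, ∫⁻ t in Ioc 0 s, ψ t = ∫⁻ t in Iic s, ψ t ∂μ :=
    fun s hs => by
    rw [Measure.restrict_restrict measurableSet_Iic, Iic_inter_Ioc_of_le hs.2]
  have htail : ∀ t ∈ Ioc 0 b,
      ∫⁻ s in Ici t, ENNReal.ofReal (s ^ (-β - 1)) ∂μ ≤
        ENNReal.ofReal (1 / β) * ENNReal.ofReal (t ^ (-β)) :=
    fun t ht => calc
      _ ≤ ∫⁻ s in Ici t, ENNReal.ofReal (s ^ (-β - 1)) :=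
        lintegral_mono_fn' (Measure.restrict_mono_measure Measure.restrict_le_self _)
          fun _ => le_rfl
      _ = ENNReal.ofReal (1 / β) * ENNReal.ofReal (t ^ (-β)) := by
        rw [setLIntegral_congr Ioi_ae_eq_Ici.symm, lintegral_Ioi_rpow (by linarith) ht.1,
          ← ENNReal.ofReal_mul (by positivity)]
        congr 1
        rw [show -β - 1 + 1 = -β by ring]
        field_simp
  calc ∫⁻ s in Ioc 0 b, ENNReal.ofReal (s ^ (-β - 1)) * ∫⁻ t in Ioc 0 s, ψ t
      = ∫⁻ s, ENNReal.ofReal (s ^ (-β - 1)) * ∫⁻ t in Iic s, ψ t ∂μ ∂μ :=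
        setLIntegral_congr_fun measurableSet_Ioc fun s hs => by rw [hinner s hs]
    _ = ∫⁻ t, ψ t * ∫⁻ s in Ici t, ENNReal.ofReal (s ^ (-β - 1)) ∂μ ∂μ :=
        lintegral_mul_setLIntegral_Iic_eq (by fun_prop) hψ
    _ ≤ ∫⁻ t, ψ t * (ENNReal.ofReal (1 / β) * ENNReal.ofReal (t ^ (-β))) ∂μ :=
        setLIntegral_mono_ae' measurableSet_Ioc
          (ae_of_all _ fun t ht => by gcongr; exact htail t ht)
    _ = ENNReal.ofReal (1 / β) * ∫⁻ t in Ioc 0 b, ENNReal.ofReal (t ^ (-β)) * ψ t := by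
        rw [← lintegral_const_mul' _ _ ENNReal.ofReal_ne_top]
        congr with t
        ring

theorem lintegral_Ioc_rpow_mul_sq_lintegral_Ioc_le {k : ℝ} (hk : k < 1) {b : ℝ}
    {F : ℝ → ℝ≥0∞} (hF : AEMeasurable F (volume.restrict (Ioc 0 b))) :
    ∫⁻ s in Ioc 0 b, ENNReal.ofReal (s ^ (k - 2)) * (∫⁻ t in Ioc 0 s, F t) ^ 2 ≤
      ENNReal.ofReal (4 / (1 - k) ^ 2) * ∫⁻ s in Ioc 0 b, ENNReal.ofReal (s ^ k) * F s ^ 2 := by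
  set a := (k + 1) / 2
  set β := (1 - k) / 2
  have hβ : 0 < β := by simp only [β]; linarith
  have hpointwise : ∀ s ∈ Ioc 0 b,
      ENNReal.ofReal (s ^ (k - 2)) * (∫⁻ t in Ioc 0 s, F t) ^ 2 ≤
        ENNReal.ofReal (1 / β) *
          (ENNReal.ofReal (s ^ (-β - 1)) *
            ∫⁻ t in Ioc 0 s, ENNReal.ofReal (t ^ a) * F t ^ 2) := by
    intro s hs
    have hFs : AEMeasurable F (volume.restrict (Ioc 0 s)) :=
      hF.mono_measure (Measure.restrict_mono (Ioc_subset_Ioc_right hs.2) le_rfl)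
    calc ENNReal.ofReal (s ^ (k - 2)) * (∫⁻ t in Ioc 0 s, F t) ^ 2
        ≤ ENNReal.ofReal (s ^ (k - 2)) * (ENNReal.ofReal (s ^ (1 - a) / (1 - a)) *
            ∫⁻ t in Ioc 0 s, ENNReal.ofReal (t ^ a) * F t ^ 2) := by
          gcongr
          exact sq_lintegral_Ioc_le_rpow_mul_lintegral (by simp only [a]; linarith) hs.1.le hFs
      _ = _ := by
          rw [show 1 - a = β by ring, div_eq_inv_mul, ENNReal.ofReal_mul (by positivity),
            ← mul_assoc, mul_left_comm, ENNReal.ofReal_rpow_mul_ofReal_rpow hs.1,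
            show k - 2 + β = -β - 1 by ring, one_div, mul_assoc]
  calc ∫⁻ s in Ioc 0 b, ENNReal.ofReal (s ^ (k - 2)) * (∫⁻ t in Ioc 0 s, F t) ^ 2
      ≤ ∫⁻ s in Ioc 0 b, ENNReal.ofReal (1 / β) *
          (ENNReal.ofReal (s ^ (-β - 1)) *
            ∫⁻ t in Ioc 0 s, ENNReal.ofReal (t ^ a) * F t ^ 2) :=
        setLIntegral_mono_ae' measurableSet_Ioc (ae_of_all _ hpointwise)
    _ ≤ ENNReal.ofReal (1 / β) * (ENNReal.ofReal (1 / β) *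
          ∫⁻ t in Ioc 0 b,
            ENNReal.ofReal (t ^ (-β)) * (ENNReal.ofReal (t ^ a) * F t ^ 2)) := by
        rw [lintegral_const_mul' _ _ ENNReal.ofReal_ne_top]
        gcongr
        exact lintegral_Ioc_rpow_mul_lintegral_Ioc_le hβ (by fun_prop)
    _ = ENNReal.ofReal (4 / (1 - k) ^ 2) *
          ∫⁻ s in Ioc 0 b, ENNReal.ofReal (s ^ k) * F s ^ 2 := by
        rw [← mul_assoc, ← ENNReal.ofReal_mul (by positivity)]
        congr 1
        · congr 1
          simp only [β]
          field_simp
          ring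
        · refine setLIntegral_congr_fun measurableSet_Ioc fun t ht => ?_
          rw [← mul_assoc, ENNReal.ofReal_rpow_mul_ofReal_rpow ht.1, show -β + a = k by ring]

theorem integrableOn_Ioc_of_integrableOn_rpow_mul_sq {k : ℝ} (hk : k < 1) {b : ℝ} (hb : 0 ≤ b)
    {f : ℝ → ℝ} (hf : AEStronglyMeasurable f (volume.restrict (Ioc 0 b)))
    (h : IntegrableOn (fun t => t ^ k * f t ^ 2) (Ioc 0 b)) : IntegrableOn f (Ioc 0 b) := by
  refine ⟨hf, ?_⟩
  have hweighted : ∫⁻ t in Ioc 0 b, ENNReal.ofReal (t ^ k) * ‖f t‖ₑ ^ 2 < ∞ := by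
    refine lt_of_eq_of_lt (setLIntegral_congr_fun measurableSet_Ioc fun t ht => ?_) h.2
    rw [← ENNReal.ofReal_mul_sq (Real.rpow_nonneg ht.1.le k), ← ofReal_norm,
      Real.norm_of_nonneg (mul_nonneg (Real.rpow_nonneg ht.1.le k) (sq_nonneg _))]
  have hsq := sq_lintegral_Ioc_le_rpow_mul_lintegral hk hb hf.enorm
  have : (∫⁻ t in Ioc 0 b, ‖f t‖ₑ) ^ 2 < ∞ :=
    hsq.trans_lt (ENNReal.mul_lt_top ENNReal.ofReal_lt_top hweighted)
  exact (ENNReal.pow_lt_top_iff.mp this).resolve_right two_ne_zero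

theorem exists_tendsto_nhdsWithin_Ioc_of_hasDerivAt {g dg : ℝ → ℝ} {a b : ℝ} (hab : a ≤ b)
    (hderiv : ∀ s ∈ Ioc a b, HasDerivAt g (dg s) s) (hint : IntegrableOn dg (Ioc a b)) :
    ∃ g0, Tendsto g (nhdsWithin a (Ioc a b)) (nhds g0) ∧
      ∀ s ∈ Ioc a b, g s - g0 = ∫ t in Ioc a s, dg t := by
  set G : ℝ → ℝ := fun x => ∫ t in Ioc a x, dg t
  have hII : IntervalIntegrable dg volume a b :=
    (intervalIntegrable_iff_integrableOn_Ioc_of_le hab).2 hint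
  have hrepr : ∀ s ∈ Ioc a b, g s - (g b - G b) = G s := by
    intro s hs
    have hFTC : ∫ t in s..b, dg t = g b - g s :=
      intervalIntegral.integral_eq_sub_of_hasDerivAt
        (fun x hx => hderiv x (by
          rw [uIcc_of_le hs.2] at hx
          exact ⟨hs.1.trans_le hx.1, hx.2⟩))
        (hII.mono_set (by
          rw [uIcc_of_le hs.2, uIcc_of_le hab]; exact Icc_subset_Icc hs.1.le le_rfl))
    have hsplit := intervalIntegral.integral_interval_sub_left hII
      (hII.mono_set (by
        rw [uIcc_of_le hs.1.le, uIcc_of_le hab]; exact Icc_subset_Icc le_rfl hs.2))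
    simp only [G, ← intervalIntegral.integral_of_le hab,
      ← intervalIntegral.integral_of_le hs.1.le]
    linarith
  have hG : Tendsto G (nhdsWithin a (Ioc a b)) (nhds 0) := by
    have hcont := intervalIntegral.continuousOn_primitive
      ((integrableOn_Icc_iff_integrableOn_Ioc).mpr hint) a ⟨le_rfl, hab⟩
    simpa [G] using (hcont.mono Ioc_subset_Icc_self).tendsto
  refine ⟨g b - G b, ?_, hrepr⟩
  have := hG.const_add (g b - G b)
  rw [add_zero] at this
  refine this.congr' (eventually_nhdsWithin_of_forall fun s hs => ?_)
  linarith [hrepr s hs]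

/-- **Hardy inequality, `k < 1`.** Let `k < 1` and let `g ∈ C¹((0,1])`
satisfy `∫₀¹ s^k (g² + g'²) ds < ∞`. Then `g` extends continuously to `s = 0` (it has a
trace `g(0)`), and there exists `C` depending only on `k` such that
`∫₀¹ s^{k-2} (g - g(0))² ds ≤ C ∫₀¹ s^k g'² ds`. -/
theorem hardy_inequality_k_lt_one (k : ℝ) (hk : k < 1) :
    ∃ C : ℝ, 0 < C ∧
      ∀ g dg : ℝ → ℝ,
        (∀ s ∈ Ioc (0 : ℝ) 1, HasDerivAt g (dg s) s) →
        ContinuousOn dg (Ioc (0 : ℝ) 1) →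
        IntegrableOn (fun s => s ^ k * (g s ^ 2 + dg s ^ 2)) (Ioc (0 : ℝ) 1) →
        ∃ g0 : ℝ,
          Tendsto g (nhdsWithin 0 (Ioc (0 : ℝ) 1)) (nhds g0) ∧
          ∫⁻ s in Ioc (0 : ℝ) 1, ENNReal.ofReal (s ^ (k - 2) * (g s - g0) ^ 2) ≤
            ENNReal.ofReal C *
              ∫⁻ s in Ioc (0 : ℝ) 1, ENNReal.ofReal (s ^ k * dg s ^ 2) := by
  have hk' : 0 < 1 - k := by linarith
  refine ⟨4 / (1 - k) ^ 2, by positivity, fun g dg hderiv hcont hint => ?_⟩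
  have hdg_meas : AEStronglyMeasurable dg (volume.restrict (Ioc 0 1)) :=
    hcont.aestronglyMeasurable measurableSet_Ioc
  have hdg_sq : IntegrableOn (fun s => s ^ k * dg s ^ 2) (Ioc 0 1) :=
    hint.mono' (by fun_prop) <|
      (ae_restrict_mem measurableSet_Ioc).mono fun s hs => by
        have hsk : 0 ≤ s ^ k := Real.rpow_nonneg hs.1.le k
        rw [Real.norm_of_nonneg (by positivity)]
        gcongr
        exact le_add_of_nonneg_left (sq_nonneg _)
  obtain ⟨g0, hlim, hrepr⟩ := exists_tendsto_nhdsWithin_Ioc_of_hasDerivAt zero_le_one hderiv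
    (integrableOn_Ioc_of_integrableOn_rpow_mul_sq hk zero_le_one hdg_meas hdg_sq)
  refine ⟨g0, hlim, ?_⟩
  calc ∫⁻ s in Ioc 0 1, ENNReal.ofReal (s ^ (k - 2) * (g s - g0) ^ 2)
      = ∫⁻ s in Ioc 0 1, ENNReal.ofReal (s ^ (k - 2)) * ‖∫ t in Ioc 0 s, dg t‖ₑ ^ 2 :=
        setLIntegral_congr_fun measurableSet_Ioc fun s hs => by
          rw [hrepr s hs, ENNReal.ofReal_mul_sq (Real.rpow_nonneg hs.1.le _)]
    _ ≤ ∫⁻ s in Ioc 0 1,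
          ENNReal.ofReal (s ^ (k - 2)) * (∫⁻ t in Ioc 0 s, ‖dg t‖ₑ) ^ 2 := by
        gcongr
        exact enorm_integral_le_lintegral_enorm _
    _ ≤ ENNReal.ofReal (4 / (1 - k) ^ 2) *
          ∫⁻ s in Ioc 0 1, ENNReal.ofReal (s ^ k) * ‖dg s‖ₑ ^ 2 :=
        lintegral_Ioc_rpow_mul_sq_lintegral_Ioc_le hk hdg_meas.enorm
    _ = ENNReal.ofReal (4 / (1 - k) ^ 2) *
          ∫⁻ s in Ioc 0 1, ENNReal.ofReal (s ^ k * dg s ^ 2) := by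
        congr 1
        exact setLIntegral_congr_fun measurableSet_Ioc fun s hs =>
          (ENNReal.ofReal_mul_sq (Real.rpow_nonneg hs.1.le k) _).symm
end

section
/- For the polytropic equation of state P(ρ) = Kρ^γ with γ > 1, the support radius and mass of the non-rotating star with center density μ satisfy the scaling relations R_μ = C₂ μ^{(γ-2)/2} and M(μ) = C₁ μ^{(3γ-4)/2} for positive constants C₁, C₂ depending only on γ and K. Consequently M(μ)/R_μ = (C₁/C₂) μ^{γ-1} is strictly increasing in μ; moreover M'(μ) > 0 if γ > 4/3 and M'(μ) < 0 if 1 < γ < 4/3. -/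
open Set Real

/-! With `n = 1/(γ-1)` and `c = α^{(n-1)/2}`, the density of the star of center density `μ` is
`ρ(r) = μ θ(c r)^n`, so its radius is `R₀ / c` and, by the substitution `s = c r`, its mass is `4π μ c⁻³ ∫₀^{R₀} θ^n s² ds`.
Since `α` is a constant times `μ^{γ-1}`, both are constant multiples of powers of `μ`, and the
monotonicity claims are those of `μ ↦ μ^p` according to the sign of `p`. -/

/-- The scale `α = Φ'(μ)` of the Lane–Emden substitution `y_μ(r) = α θ(α^{(n-1)/2} r)`. -/
noncomputable def laneEmdenScale (γ K μ : ℝ) : ℝ := K * γ / (γ - 1) * μ ^ (γ - 1)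

lemma laneEmdenScale_pos {γ K μ : ℝ} (hγ : 1 < γ) (hK : 0 < K) (hμ : 0 < μ) :
    0 < laneEmdenScale γ K μ := by
  unfold laneEmdenScale
  positivity

lemma laneEmdenScale_rpow {γ K μ : ℝ} (hA : 0 ≤ K * γ / (γ - 1)) (hμ : 0 ≤ μ) (p : ℝ) :
    laneEmdenScale γ K μ ^ p = (K * γ / (γ - 1)) ^ p * μ ^ ((γ - 1) * p) := by
  rw [laneEmdenScale, mul_rpow hA (rpow_nonneg hμ _), ← rpow_mul hμ]

lemma polytrope_density_eq {γ K μ t : ℝ} (hγ : 1 < γ) (hK : K ≠ 0) (hμ : 0 ≤ μ) (ht : 0 ≤ t) :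
    ((γ - 1) / (K * γ) * (laneEmdenScale γ K μ * t)) ^ (1 / (γ - 1)) = μ * t ^ (1 / (γ - 1)) := by
  have hγ₁ : γ - 1 ≠ 0 := (sub_pos.2 hγ).ne'
  have hγ₀ : γ ≠ 0 := by positivity
  have : (γ - 1) / (K * γ) * (laneEmdenScale γ K μ * t) = μ ^ (γ - 1) * t := by
    unfold laneEmdenScale; field_simp
  rw [this, mul_rpow (rpow_nonneg hμ _) ht, ← rpow_mul hμ, mul_one_div_cancel hγ₁, rpow_one]

lemma integral_comp_mul_mul_sq (f : ℝ → ℝ) {c : ℝ} (hc : c ≠ 0) (b : ℝ) :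
    ∫ r in (0 : ℝ)..b, f (c * r) * r ^ 2 = (c ^ 3)⁻¹ * ∫ s in (0 : ℝ)..c * b, f s * s ^ 2 := by
  have hsq : ∀ r, f (c * r) * r ^ 2 = (c ^ 2)⁻¹ * (f (c * r) * (c * r) ^ 2) := fun r => by
    field_simp
  simp_rw [hsq, intervalIntegral.integral_const_mul,
    intervalIntegral.integral_comp_mul_left (fun s => f s * s ^ 2) hc, mul_zero, smul_eq_mul]
  ring

lemma integral_rpow_mul_sq_pos {θ : ℝ → ℝ} {R₀ n : ℝ} (hR₀ : 0 < R₀) (hn : 0 ≤ n)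
    (hθpos : ∀ s ∈ Ioo 0 R₀, 0 < θ s) (hθcont : ContinuousOn θ (Icc 0 R₀)) :
    0 < ∫ s in (0 : ℝ)..R₀, θ s ^ n * s ^ 2 := by
  refine intervalIntegral.intervalIntegral_pos_of_pos_on ?_ (fun s hs => ?_) hR₀
  · refine ContinuousOn.intervalIntegrable ?_
    rw [uIcc_of_le hR₀.le]
    exact (hθcont.rpow_const fun _ _ => Or.inr hn).mul (continuousOn_id.pow 2)
  · exact mul_pos (rpow_pos_of_pos (hθpos s hs) n) (pow_pos hs.1 2)

lemma strictMonoOn_const_mul_rpow {C p : ℝ} (hC : 0 < C) (hp : 0 < p) :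
    StrictMonoOn (fun x => C * x ^ p) (Ioi 0) := fun _ ha _ _ hab =>
  mul_lt_mul_of_pos_left (rpow_lt_rpow (le_of_lt ha) hab hp) hC

lemma strictAntiOn_const_mul_rpow {C p : ℝ} (hC : 0 < C) (hp : p < 0) :
    StrictAntiOn (fun x => C * x ^ p) (Ioi 0) := fun _ ha _ _ hab =>
  mul_lt_mul_of_pos_left (rpow_lt_rpow_of_neg ha hab hp) hC

lemma polytrope_radius_eq {γ K μ : ℝ} (hγ : 1 < γ) (hK : 0 < K) (hμ : 0 ≤ μ) (R₀ : ℝ) :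
    laneEmdenScale γ K μ ^ (-((1 / (γ - 1) - 1) / 2)) * R₀
      = (K * γ / (γ - 1)) ^ (-((1 / (γ - 1) - 1) / 2)) * R₀ * μ ^ ((γ - 2) / 2) := by
  have hγ₁ : 0 < γ - 1 := sub_pos.2 hγ
  have hexp : (γ - 1) * -((1 / (γ - 1) - 1) / 2) = (γ - 2) / 2 := by field_simp; ring
  rw [laneEmdenScale_rpow (by positivity) hμ, hexp]
  ring

lemma polytrope_mass_eq {γ K μ R₀ : ℝ} {θ : ℝ → ℝ} (hγ : 1 < γ) (hK : 0 < K) (hμ : 0 < μ)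
    (hR₀ : 0 ≤ R₀) (hθnn : ∀ s ∈ Icc 0 R₀, 0 ≤ θ s) :
    4 * π * ∫ r in (0 : ℝ)..laneEmdenScale γ K μ ^ (-((1 / (γ - 1) - 1) / 2)) * R₀,
        ((γ - 1) / (K * γ) * (laneEmdenScale γ K μ *
          θ (laneEmdenScale γ K μ ^ ((1 / (γ - 1) - 1) / 2) * r))) ^ (1 / (γ - 1)) * r ^ 2
      = 4 * π * (∫ s in (0 : ℝ)..R₀, θ s ^ (1 / (γ - 1)) * s ^ 2)
          * (K * γ / (γ - 1)) ^ (-(3 * ((1 / (γ - 1) - 1) / 2))) * μ ^ ((3 * γ - 4) / 2) := by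
  have hγ₁ : 0 < γ - 1 := sub_pos.2 hγ
  set α := laneEmdenScale γ K μ
  set β := (1 / (γ - 1) - 1) / 2
  have hα : 0 < α := laneEmdenScale_pos hγ hK hμ
  have hsubst := integral_comp_mul_mul_sq
    (fun s => ((γ - 1) / (K * γ) * (α * θ s)) ^ (1 / (γ - 1))) (rpow_pos_of_pos hα β).ne'
    (α ^ (-β) * R₀)
  beta_reduce at hsubst
  have hradius : α ^ β * (α ^ (-β) * R₀) = R₀ := by
    rw [← mul_assoc, ← rpow_add hα, add_neg_cancel, rpow_zero, one_mul]
  have hdensity : ∫ s in (0 : ℝ)..R₀, ((γ - 1) / (K * γ) * (α * θ s)) ^ (1 / (γ - 1)) * s ^ 2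
      = μ * ∫ s in (0 : ℝ)..R₀, θ s ^ (1 / (γ - 1)) * s ^ 2 := by
    rw [← intervalIntegral.integral_const_mul]
    refine intervalIntegral.integral_congr fun s hs => ?_
    rw [uIcc_of_le hR₀] at hs
    simp only [α, polytrope_density_eq hγ hK.ne' hμ.le (hθnn s hs), mul_assoc]
  have hexp : μ * μ ^ ((γ - 1) * -(3 * β)) = μ ^ ((3 * γ - 4) / 2) := by
    rw [mul_comm, ← rpow_add_one hμ.ne']
    congr 1
    simp only [β]
    field_simp
    ring
  have hcube : ((α ^ β) ^ 3)⁻¹ = α ^ (-(3 * β)) := by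
    rw [← rpow_natCast, ← rpow_mul hα.le, ← rpow_neg hα.le, mul_comm, Nat.cast_ofNat]
  rw [hsubst, hradius, hdensity, hcube, laneEmdenScale_rpow (by positivity) hμ.le, ← hexp]
  ring

theorem polytrope_mass_radius_scaling_general
    (γ K : ℝ) (hγ : 1 < γ) (hK : 0 < K)
    (θ : ℝ → ℝ) (R₀ : ℝ) (hR₀ : 0 < R₀)
    (hθpos : ∀ s ∈ Ico 0 R₀, 0 < θ s) (hθR₀ : θ R₀ = 0)
    (hθcont : ContinuousOn θ (Icc 0 R₀))
    (Rfun Mfun : ℝ → ℝ)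
    (hRfun : ∀ μ > (0 : ℝ),
      Rfun μ = (K * γ / (γ - 1) * μ ^ (γ - 1)) ^ (-((1 / (γ - 1) - 1) / 2)) * R₀)
    (hMfun : ∀ μ > (0 : ℝ),
      Mfun μ = 4 * Real.pi * ∫ r in (0 : ℝ)..Rfun μ,
        ((γ - 1) / (K * γ) * ((K * γ / (γ - 1) * μ ^ (γ - 1)) *
          θ ((K * γ / (γ - 1) * μ ^ (γ - 1)) ^ ((1 / (γ - 1) - 1) / 2) * r))) ^ (1 / (γ - 1))
          * r ^ 2) :
    ∃ C₁ C₂ : ℝ, 0 < C₁ ∧ 0 < C₂ ∧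
      (∀ μ > (0 : ℝ), Rfun μ = C₂ * μ ^ ((γ - 2) / 2) ∧
        Mfun μ = C₁ * μ ^ ((3 * γ - 4) / 2)) ∧
      StrictMonoOn (fun μ => Mfun μ / Rfun μ) (Ioi 0) ∧
      (4 / 3 < γ → StrictMonoOn Mfun (Ioi 0)) ∧
      (γ < 4 / 3 → StrictAntiOn Mfun (Ioi 0)) := by
  have hθnn : ∀ s ∈ Icc 0 R₀, 0 ≤ θ s := fun s hs =>
    hs.2.eq_or_lt.elim (fun h => (h ▸ hθR₀).ge) fun h => (hθpos s ⟨hs.1, h⟩).le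
  have hI := integral_rpow_mul_sq_pos hR₀ (one_div_pos.2 (sub_pos.2 hγ)).le
    (fun s hs => hθpos s (Ioo_subset_Ico_self hs)) hθcont
  set C₁ := 4 * π * (∫ s in (0 : ℝ)..R₀, θ s ^ (1 / (γ - 1)) * s ^ 2)
    * (K * γ / (γ - 1)) ^ (-(3 * ((1 / (γ - 1) - 1) / 2)))
  set C₂ := (K * γ / (γ - 1)) ^ (-((1 / (γ - 1) - 1) / 2)) * R₀
  have hscale : ∀ μ > (0 : ℝ),
      Rfun μ = C₂ * μ ^ ((γ - 2) / 2) ∧ Mfun μ = C₁ * μ ^ ((3 * γ - 4) / 2) := fun μ hμ =>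
    ⟨(hRfun μ hμ).trans (polytrope_radius_eq hγ hK hμ.le R₀), by
      rw [hMfun μ hμ, hRfun μ hμ]
      exact polytrope_mass_eq hγ hK hμ hR₀.le hθnn⟩
  have hratio : EqOn (fun μ => C₁ / C₂ * μ ^ (γ - 1)) (fun μ => Mfun μ / Rfun μ) (Ioi 0) :=
    fun μ hμ => by
      dsimp only
      rw [(hscale μ hμ).1, (hscale μ hμ).2, show γ - 1 = (3 * γ - 4) / 2 - (γ - 2) / 2 by ring,
        rpow_sub hμ]
      field_simp
  have hmass : EqOn (fun μ => C₁ * μ ^ ((3 * γ - 4) / 2)) Mfun (Ioi 0) :=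
    fun μ hμ => ((hscale μ hμ).2).symm
  exact ⟨C₁, C₂, by positivity, by positivity, hscale,
    (strictMonoOn_const_mul_rpow (by positivity) (sub_pos.2 hγ)).congr hratio,
    fun hγ' => (strictMonoOn_const_mul_rpow (by positivity) (by linarith)).congr hmass,
    fun hγ' => (strictAntiOn_const_mul_rpow (by positivity) (by linarith)).congr hmass⟩

/-- For the polytropic equation of state `P(ρ) = Kρ^γ` with `γ > 1`,
the steady star with center density `μ` is obtained from the Lane–Emden function `θ` of
index `n = 1/(γ-1)` (assumed to have finite support radius `R₀`) via the scaling
`y_μ(r) = α θ(α^{(n-1)/2} r)`, `α = (Kγ/(γ-1)) μ^{γ-1}`, `ρ = ((γ-1)y/(Kγ))^n`. Then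
the support radius and total mass satisfy `R_μ = C₂ μ^{(γ-2)/2}` and
`M(μ) = C₁ μ^{(3γ-4)/2}` for positive constants `C₁, C₂`; consequently `M(μ)/R_μ` is
strictly increasing in `μ`, `M` is strictly increasing when `γ > 4/3` and strictly
decreasing when `1 < γ < 4/3`. -/
theorem polytrope_mass_radius_scaling
    (γ K : ℝ) (hγ : 1 < γ) (hK : 0 < K)
    (θ : ℝ → ℝ) (R₀ : ℝ) (hR₀ : 0 < R₀)
    (hθ0 : θ 0 = 1) (hθpos : ∀ s ∈ Ico 0 R₀, 0 < θ s) (hθR₀ : θ R₀ = 0)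
    (hθcont : ContinuousOn θ (Icc 0 R₀))
    (Rfun Mfun : ℝ → ℝ)
    (hRfun : ∀ μ > (0 : ℝ),
      Rfun μ = (K * γ / (γ - 1) * μ ^ (γ - 1)) ^ (-((1 / (γ - 1) - 1) / 2)) * R₀)
    (hMfun : ∀ μ > (0 : ℝ),
      Mfun μ = 4 * Real.pi * ∫ r in (0 : ℝ)..Rfun μ,
        ((γ - 1) / (K * γ) * ((K * γ / (γ - 1) * μ ^ (γ - 1)) *
          θ ((K * γ / (γ - 1) * μ ^ (γ - 1)) ^ ((1 / (γ - 1) - 1) / 2) * r))) ^ (1 / (γ - 1))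
          * r ^ 2) :
    ∃ C₁ C₂ : ℝ, 0 < C₁ ∧ 0 < C₂ ∧
      (∀ μ > (0 : ℝ), Rfun μ = C₂ * μ ^ ((γ - 2) / 2) ∧
        Mfun μ = C₁ * μ ^ ((3 * γ - 4) / 2)) ∧
      StrictMonoOn (fun μ => Mfun μ / Rfun μ) (Ioi 0) ∧
      (4 / 3 < γ → StrictMonoOn Mfun (Ioi 0)) ∧
      (γ < 4 / 3 → StrictAntiOn Mfun (Ioi 0)) :=
  polytrope_mass_radius_scaling_general γ K hγ hK θ R₀ hR₀ hθpos hθR₀ hθcont Rfun Mfun hRfun hMfun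
end

section
/- Let y: [0,∞) → R solve y'(r) = -(4π/r²)∫₀^r s² F₊(y(s)) ds with y(0) = α > 0, where F₊: R → [0,∞) is continuous, nondecreasing, F₊(s) = 0 for s ≤ 0 and F₊(s) > 0 for s > 0. Suppose y(R) = 0 for some R > 0 with y > 0 on [0,R). Then y'(R) = -M/R² < 0, where M = 4π∫₀^R s²F₊(y(s)) ds > 0; consequently there are constants c₁, c₂ > 0 and δ > 0 such that c₁(R-r) ≤ y(r) ≤ c₂(R-r) for all r ∈ (R-δ, R). -/
open Set

/-- Let `y` solve `y'(r) = -(4π/r²)∫₀^r s² F₊(y(s)) ds` with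
`y(0) = α > 0`, where `F₊` is continuous, nondecreasing, vanishes on `(-∞,0]` and is
positive on `(0,∞)`. Suppose `y(R) = 0` with `y > 0` on `[0,R)`. Then
`y'(R) = -M/R² < 0` with `M = 4π∫₀^R s²F₊(y(s)) ds > 0`; consequently there are
`c₁, c₂, δ > 0` such that `c₁(R-r) ≤ y(r) ≤ c₂(R-r)` for `r ∈ (R-δ, R)`. -/
theorem steady_star_boundary_linear_vanishing
    (F : ℝ → ℝ) (hFcont : Continuous F) (hFmono : Monotone F)
    (hFzero : ∀ s ≤ (0 : ℝ), F s = 0) (hFpos : ∀ s > (0 : ℝ), 0 < F s)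
    (α : ℝ) (hα : 0 < α)
    (y : ℝ → ℝ) (hy0 : y 0 = α)
    (hycont : ContinuousOn y (Ici 0))
    (hyode : ∀ r > (0 : ℝ),
      HasDerivAt y (-(4 * Real.pi / r ^ 2) * ∫ s in (0 : ℝ)..r, s ^ 2 * F (y s)) r)
    (R : ℝ) (hR : 0 < R) (hyR : y R = 0) (hypos : ∀ r ∈ Ico (0 : ℝ) R, 0 < y r) :
    0 < 4 * Real.pi * ∫ s in (0 : ℝ)..R, s ^ 2 * F (y s) ∧
    HasDerivAt y (-(4 * Real.pi * ∫ s in (0 : ℝ)..R, s ^ 2 * F (y s)) / R ^ 2) R ∧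
    ∃ c₁ c₂ δ : ℝ, 0 < c₁ ∧ 0 < c₂ ∧ 0 < δ ∧
      ∀ r ∈ Ioo (R - δ) R, c₁ * (R - r) ≤ y r ∧ y r ≤ c₂ * (R - r) := by

  have hIintble : IntervalIntegrable (fun s => s ^ 2 * F (y s)) MeasureTheory.volume 0 R := by
    apply ContinuousOn.intervalIntegrable
    rw [uIcc_of_le hR.le]
    apply ContinuousOn.mul (continuousOn_pow 2)
    exact hFcont.comp_continuousOn (hycont.mono (fun x hx => hx.1))
  have hIpos : 0 < ∫ s in (0 : ℝ)..R, s ^ 2 * F (y s) := by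
    apply intervalIntegral.intervalIntegral_pos_of_pos_on hIintble _ hR
    intro x hx
    exact mul_pos (pow_pos hx.1 2) (hFpos _ (hypos x ⟨hx.1.le, hx.2⟩))
  have hMpos : 0 < 4 * Real.pi * ∫ s in (0 : ℝ)..R, s ^ 2 * F (y s) :=
    mul_pos (by positivity) hIpos
  have hderiv : HasDerivAt y
      (-(4 * Real.pi * ∫ s in (0 : ℝ)..R, s ^ 2 * F (y s)) / R ^ 2) R := by
    have := hyode R hR
    convert this using 1
    field_simp
  refine ⟨hMpos, hderiv, ?_⟩
  set d : ℝ := -(4 * Real.pi * ∫ s in (0 : ℝ)..R, s ^ 2 * F (y s)) / R ^ 2 with hd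
  have hdneg : d < 0 := div_neg_of_neg_of_pos (neg_neg_of_pos hMpos) (pow_pos hR 2)
  have hslope := hasDerivAt_iff_tendsto_slope.mp hderiv
  have hev : ∀ᶠ r in nhdsWithin R {R}ᶜ, |slope y R r - d| < -d / 2 := by
    have : Ioo (d - (-d/2)) (d + (-d/2)) ∈ nhds d := Ioo_mem_nhds (by linarith) (by linarith)
    filter_upwards [hslope this] with r hr
    rw [abs_lt]
    obtain ⟨h1, h2⟩ := hr
    constructor <;> linarith
  rw [eventually_nhdsWithin_iff, Metric.eventually_nhds_iff] at hev
  obtain ⟨δ, hδ, hball⟩ := hev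
  refine ⟨-d / 2, -3 * d / 2, δ, by linarith, by linarith, hδ, ?_⟩
  intro r hr
  have hrne : r ≠ R := ne_of_lt hr.2
  have hdist : dist r R < δ := by
    rw [Real.dist_eq, abs_lt]; constructor <;> [linarith [hr.1]; linarith [hr.2]]
  have hs := hball hdist hrne
  rw [abs_lt] at hs
  have hsl : slope y R r = y r / (r - R) := by
    simp [slope_def_field, hyR, div_eq_div_iff]
  have hrR : r - R < 0 := by linarith [hr.2]
  have hy_eq : y r = slope y R r * (r - R) := by
    rw [hsl, div_mul_cancel₀]
    exact sub_ne_zero.mpr hrne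
  constructor
  · rw [hy_eq]
    have h1 : slope y R r < d / 2 := by linarith [hs.2]
    nlinarith [hs.1, hs.2]
  · rw [hy_eq]
    nlinarith [hs.1, hs.2]
end

section
/- Let Y be a Hilbert space with bounded symmetric uniformly positive form ⟨A·,·⟩ (A ≥ δ > 0) and let L̃ = B'LBA be self-adjoint on (Y, [·,·]) with [u,v] = ⟨Au,v⟩, where L|_{closure of R(B)} ≥ 0. Let Y₁ = ker L̃ and Y₂ = {y ∈ Y : ⟨Ay, ỹ⟩ = 0 for all ỹ ∈ Y₁}. Then Y₁ = ker(L_{R(B)} BA), Y₂ equals the closure of R(L̃), and Y = Y₁ ⊕ Y₂ with the quadratic form A block-diagonal in this decomposition. -/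
open scoped RealInnerProductSpace

/-- Projection onto a closed subspace with respect to a bounded coercive
bilinear form `⟪A·,·⟫` (Lax–Milgram). -/
lemma aux_proj_of_coercive {Y : Type*} [NormedAddCommGroup Y] [InnerProductSpace ℝ Y]
    [CompleteSpace Y]
    (A : Y →L[ℝ] Y) (δ : ℝ) (hδ : 0 < δ) (hAcoer : ∀ y : Y, δ * ‖y‖ ^ 2 ≤ ⟪A y, y⟫)
    (M : Submodule ℝ Y) (hM : IsClosed (M : Set Y)) (y : Y) :
    ∃ m ∈ M, ∀ z ∈ M, ⟪A (y - m), z⟫ = 0 := by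
  haveI : CompleteSpace M := hM.completeSpace_coe
  set b : M →L[ℝ] M →L[ℝ] ℝ :=
    (innerSL ℝ (E := Y)).bilinearComp (A.comp M.subtypeL) M.subtypeL with hb
  have hbapp : ∀ u v : M, b u v = ⟪A (u : Y), (v : Y)⟫ := fun u v => rfl
  have hcoer : IsCoercive b := by
    refine ⟨δ, hδ, fun u => ?_⟩
    rw [hbapp]
    calc δ * ‖u‖ * ‖u‖ = δ * ‖(u : Y)‖ ^ 2 := by
          rw [Submodule.norm_coe]; ring
      _ ≤ ⟪A (u : Y), (u : Y)⟫ := hAcoer _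
  set e := hcoer.continuousLinearEquivOfBilin with he
  set f : M →L[ℝ] ℝ := (innerSL ℝ (A y)).comp M.subtypeL with hf
  set r : M := (InnerProductSpace.toDual ℝ M).symm f with hr
  have hrapp : ∀ v : M, ⟪r, v⟫ = ⟪A y, (v : Y)⟫ := by
    intro v
    rw [hr]
    have := InnerProductSpace.toDual_symm_apply (𝕜 := ℝ) (E := M) (y := f) (x := v)
    rw [this]
    rfl
  refine ⟨(e.symm r : M), (e.symm r : M).2, ?_⟩
  intro z hz
  have key : ⟪A ((e.symm r : M) : Y), z⟫ = ⟪A y, z⟫ := by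
    have h1 : b (e.symm r) ⟨z, hz⟩ = ⟪e (e.symm r), (⟨z, hz⟩ : M)⟫ :=
      (hcoer.continuousLinearEquivOfBilin_apply _ _).symm
    rw [e.apply_symm_apply] at h1
    have := hrapp ⟨z, hz⟩
    rw [hbapp] at h1
    simp only [Submodule.coe_inner] at *
    rw [h1, this]
  rw [map_sub, inner_sub_left, key, sub_self]

/-- Let `Y` be a Hilbert space with a bounded symmetric uniformly
positive form `⟪A·,·⟫` (`A ≥ δ > 0`), `B` densely defined closed with dual `B'`, and
`L` bounded self-adjoint, nonnegative on the closure of `R(B)`. Let `L̃ = B'LBA` be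
self-adjoint on `(Y, [·,·])` with `[u,v] = ⟪Au,v⟫`, and let `Y₁ = ker L̃`,
`Y₂ = Y₁^{⊥_A}`. Then `Y₁ = ker(L_{R(B)}BA)`, `Y₂` equals the closure of `R(L̃)`, and
`Y = Y₁ ⊕ Y₂` with the quadratic form `A` block-diagonal in this decomposition. -/
theorem kernel_range_decomposition_of_BLBA
    {X Y : Type*} [NormedAddCommGroup X] [InnerProductSpace ℝ X] [CompleteSpace X]
    [NormedAddCommGroup Y] [InnerProductSpace ℝ Y] [CompleteSpace Y]
    (A : Y →L[ℝ] Y) (hA : IsSelfAdjoint A)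
    (δ : ℝ) (hδ : 0 < δ) (hAcoer : ∀ y : Y, δ * ‖y‖ ^ 2 ≤ ⟪A y, y⟫)
    (B : Y →ₗ.[ℝ] X) (hBdense : Dense (B.domain : Set Y)) (hBclosed : B.IsClosed)
    (L : X →L[ℝ] X) (hL : IsSelfAdjoint L)
    (hLnonneg : ∀ x ∈ closure {x : X | ∃ w : B.domain, B w = x}, 0 ≤ ⟪L x, x⟫)
    (Lt : Y →ₗ.[ℝ] Y)
    (hLtdom : ∀ y : Y, y ∈ Lt.domain ↔
      ∃ h : A y ∈ B.domain, L (B ⟨A y, h⟩) ∈ B.adjoint.domain)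
    (hLtval : ∀ (y : Lt.domain) (h : A (y : Y) ∈ B.domain)
      (h2 : L (B ⟨A (y : Y), h⟩) ∈ B.adjoint.domain),
      Lt y = B.adjoint ⟨L (B ⟨A (y : Y), h⟩), h2⟩)
    (hLtsa : ∀ v z : Y,
      (∃ hv : v ∈ Lt.domain, Lt ⟨v, hv⟩ = z) ↔
        ∀ u : Lt.domain, ⟪A (Lt u), v⟫ = ⟪A (u : Y), z⟫)
    (Y1 Y2 : Submodule ℝ Y)
    (hY1 : ∀ y : Y, y ∈ Y1 ↔ ∃ hy : y ∈ Lt.domain, Lt ⟨y, hy⟩ = 0)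
    (hY2 : ∀ y : Y, y ∈ Y2 ↔ ∀ z ∈ Y1, ⟪A y, z⟫ = 0) :
    (∀ y : Y, y ∈ Y1 ↔ ∃ h : A y ∈ B.domain,
      ∀ x ∈ closure {x : X | ∃ w : B.domain, B w = x}, ⟪L (B ⟨A y, h⟩), x⟫ = 0) ∧
    (Y2 : Set Y) = closure {z : Y | ∃ y : Lt.domain, Lt y = z} ∧
    IsCompl Y1 Y2 ∧
    (∀ y1 ∈ Y1, ∀ y2 ∈ Y2, ⟪A y1, y2⟫ = 0) := by
  have hAsym : ∀ u v : Y, ⟪A u, v⟫ = ⟪A v, u⟫ := by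
    intro u v
    have hsym := ContinuousLinearMap.isSelfAdjoint_iff_isSymmetric.mp hA
    exact (hsym u v).trans (real_inner_comm (A v) u)
  -- characterization of Y1 via the self-adjointness of Lt
  have hY1char : ∀ y : Y, y ∈ Y1 ↔ ∀ u : Lt.domain, ⟪A (Lt u), y⟫ = 0 := by
    intro y
    rw [hY1 y, hLtsa y 0]
    simp [inner_zero_right]
  have hY1closed : IsClosed (Y1 : Set Y) := by
    have : (Y1 : Set Y) = ⋂ u : Lt.domain, {y : Y | ⟪A (Lt u), y⟫ = 0} := by
      ext y; simpa using hY1char y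
    rw [this]
    exact isClosed_iInter fun u =>
      isClosed_eq (continuous_const.inner continuous_id) continuous_const
  have hY2closed : IsClosed (Y2 : Set Y) := by
    have : (Y2 : Set Y) = ⋂ z : Y1, {y : Y | ⟪A y, (z : Y)⟫ = 0} := by
      ext y
      simp only [Set.mem_iInter, Set.mem_setOf_eq, SetLike.mem_coe, hY2 y]
      exact ⟨fun h z => h z z.2, fun h z hz => h ⟨z, hz⟩⟩
    rw [this]
    exact isClosed_iInter fun z =>
      isClosed_eq ((A.continuous.inner continuous_const)) continuous_const
  -- zero vector from vanishing quadratic form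
  have hzero : ∀ v : Y, ⟪A v, v⟫ = 0 → v = 0 := by
    intro v hv
    have h1 := hAcoer v
    rw [hv] at h1
    have h2 : ‖v‖ ^ 2 ≤ 0 := by nlinarith
    have h3 : ‖v‖ ≤ 0 := by nlinarith [norm_nonneg v]
    exact norm_le_zero_iff.mp h3
  -- Part 1
  have part1 : ∀ y : Y, y ∈ Y1 ↔ ∃ h : A y ∈ B.domain,
      ∀ x ∈ closure {x : X | ∃ w : B.domain, B w = x}, ⟪L (B ⟨A y, h⟩), x⟫ = 0 := by
    intro y
    constructor
    · intro hy
      obtain ⟨hyd, hy0⟩ := (hY1 y).1 hy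
      obtain ⟨h, h2⟩ := (hLtdom y).1 hyd
      refine ⟨h, ?_⟩
      have hval := hLtval ⟨y, hyd⟩ h h2
      rw [hy0] at hval
      have hBw : ∀ w : B.domain, ⟪L (B ⟨A y, h⟩), B w⟫ = 0 := by
        intro w
        have hfa := LinearPMap.adjoint_isFormalAdjoint hBdense
          (⟨L (B ⟨A y, h⟩), h2⟩ : B.adjoint.domain) w
        rw [← hval] at hfa
        rw [← hfa]
        simp [inner_zero_left]
      intro x hx
      have hcl : closure {x : X | ∃ w : B.domain, B w = x} ⊆
          {x : X | ⟪L (B ⟨A y, h⟩), x⟫ = 0} := by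
        apply closure_minimal
        · rintro _ ⟨w, rfl⟩
          exact hBw w
        · exact isClosed_eq (continuous_const.inner continuous_id) continuous_const
      exact hcl hx
    · rintro ⟨h, horth⟩
      have hBw : ∀ w : B.domain, ⟪L (B ⟨A y, h⟩), B w⟫ = 0 := fun w =>
        horth _ (subset_closure ⟨w, rfl⟩)
      have h2 : L (B ⟨A y, h⟩) ∈ B.adjoint.domain := by
        apply LinearPMap.mem_adjoint_domain_of_exists
        exact ⟨0, fun w => by rw [inner_zero_left, hBw w]⟩
      have hyd : y ∈ Lt.domain := (hLtdom y).2 ⟨h, h2⟩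
      refine (hY1 y).2 ⟨hyd, ?_⟩
      have hval := hLtval ⟨y, hyd⟩ h h2
      rw [hval]
      exact LinearPMap.adjoint_apply_eq hBdense (⟨L (B ⟨A y, h⟩), h2⟩ : B.adjoint.domain)
        (x₀ := 0) (fun w => by rw [inner_zero_left, hBw w])
  -- Part 4
  have part4 : ∀ y1 ∈ Y1, ∀ y2 ∈ Y2, ⟪A y1, y2⟫ = 0 := by
    intro y1 h1 y2 h2
    rw [hAsym y1 y2]
    exact (hY2 y2).1 h2 y1 h1
  -- the range of Lt lies in Y2
  have hrange_sub : {z : Y | ∃ y : Lt.domain, Lt y = z} ⊆ (Y2 : Set Y) := by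
    rintro _ ⟨u, rfl⟩
    refine (hY2 _).2 fun z hz => ?_
    exact (hY1char z).1 hz u
  -- Part 2
  have part2 : (Y2 : Set Y) = closure {z : Y | ∃ y : Lt.domain, Lt y = z} := by
    apply Set.Subset.antisymm
    · -- Y2 ⊆ closure of range
      set M : Submodule ℝ Y := (LinearMap.range Lt.toFun).topologicalClosure with hM
      have hMcoe : (M : Set Y) = closure {z : Y | ∃ y : Lt.domain, Lt y = z} := by
        rw [hM, Submodule.topologicalClosure_coe]
        congr 1
      intro y hy
      obtain ⟨m, hm, hperp⟩ := aux_proj_of_coercive A δ hδ hAcoer M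
        (Submodule.isClosed_topologicalClosure _) y
      have hv1 : y - m ∈ Y1 := by
        refine (hY1char _).2 fun u => ?_
        rw [← hAsym]
        exact hperp _ ((Submodule.le_topologicalClosure _)
          (LinearMap.mem_range.2 ⟨u, rfl⟩))
      have hmY2 : m ∈ Y2 := by
        have : (m : Y) ∈ closure {z : Y | ∃ y : Lt.domain, Lt y = z} := by
          rw [← hMcoe]; exact hm
        exact (closure_minimal hrange_sub hY2closed) this
      have hAy : ⟪A y, y - m⟫ = 0 := (hY2 y).1 hy _ hv1
      have hAm : ⟪A m, y - m⟫ = 0 := (hY2 m).1 hmY2 _ hv1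
      have hvv : ⟪A (y - m), y - m⟫ = 0 := by
        rw [map_sub, inner_sub_left, hAy, hAm, sub_self]
      have : y - m = 0 := hzero _ hvv
      have hym : y = m := sub_eq_zero.mp this
      rw [← hMcoe, hym]
      exact hm
    · exact closure_minimal hrange_sub hY2closed
  -- Part 3
  have part3 : IsCompl Y1 Y2 := by
    constructor
    · rw [disjoint_iff_inf_le]
      rintro y ⟨h1, h2⟩
      have h0 : ⟪A y, y⟫ = 0 := (hY2 y).1 h2 y h1
      simpa using hzero y h0
    · rw [codisjoint_iff_le_sup]
      intro y _
      obtain ⟨m, hm, hperp⟩ := aux_proj_of_coercive A δ hδ hAcoer Y1 hY1closed y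
      refine Submodule.mem_sup.2 ⟨m, hm, y - m, ?_, by abel⟩
      exact (hY2 _).2 fun z hz => hperp z hz
  exact ⟨part1, part2, part3, part4⟩
end

section
/- Let X, Y be Hilbert spaces, J: X* ⊃ D(J) → X anti-self-dual, L: X → X* bounded self-dual, and suppose λ ∈ C is an eigenvalue of JL with eigenvector u (i.e., JLu = λu, u ≠ 0) and μ is an eigenvalue with eigenvector v such that λ + μ̄ ≠ 0. Then ⟨Lu, v⟩ = 0. In particular, for any eigenvector u of JL with eigenvalue λ with Re λ ≠ 0, ⟨Lu, u⟩ = 0, i.e., the energy quadratic form vanishes on eigenvectors of unstable/stable eigenvalues. -/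
local notation "⟪" x ", " y "⟫" => @inner ℂ _ _ x y

/-- Let `J` be an anti-self-dual (densely defined) operator and `L` a
bounded self-adjoint operator on a Hilbert space `X`. If `JLu = λu` (`u ≠ 0`),
`JLv = μv`, and `λ + μ̄ ≠ 0`, then `⟪Lu, v⟫ = 0`. In particular, for any eigenvector `u`
of `JL` with eigenvalue `λ` having `Re λ ≠ 0`, the energy quadratic form vanishes:
`⟪Lu, u⟫ = 0`. -/
theorem energy_form_vanishes_on_eigenvectors
    {X : Type*} [NormedAddCommGroup X] [InnerProductSpace ℂ X] [CompleteSpace X]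
    (J : X →ₗ.[ℂ] X) (hJdense : Dense (J.domain : Set X))
    (hJanti : ∀ f g : J.domain, ⟪J f, (g : X)⟫ = -⟪(f : X), J g⟫)
    (L : X →L[ℂ] X) (hL : IsSelfAdjoint L)
    (u v : X) (hu : u ≠ 0) (hv : v ≠ 0)
    (lam mu : ℂ)
    (hLu : L u ∈ J.domain) (hLv : L v ∈ J.domain)
    (heigu : J ⟨L u, hLu⟩ = lam • u)
    (heigv : J ⟨L v, hLv⟩ = mu • v)
    (hcond : lam + starRingEnd ℂ mu ≠ 0) :
    ⟪L u, v⟫ = 0 ∧ (lam.re ≠ 0 → ⟪L u, u⟫ = 0) := by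
  have key : ∀ (w : X) (hLw : L w ∈ J.domain) (nu : ℂ),
      J ⟨L w, hLw⟩ = nu • w → (starRingEnd ℂ lam + nu) * ⟪L u, w⟫ = 0 := by
    intro w hLw nu heigw
    have h := hJanti ⟨L u, hLu⟩ ⟨L w, hLw⟩
    rw [heigu, heigw] at h
    simp only [inner_smul_left, inner_smul_right] at h
    have hsa : ⟪(u : X), L w⟫ = ⟪L u, w⟫ := by
      rw [← ContinuousLinearMap.adjoint_inner_left, hL.adjoint_eq]
    rw [hsa] at h
    ring_nf
    ring_nf at h
    linear_combination h
  have h1 : ⟪L u, v⟫ = 0 := by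
    have h := key v hLv mu heigv
    have hne : starRingEnd ℂ lam + mu ≠ 0 := by
      intro h0
      apply hcond
      have := congrArg (starRingEnd ℂ) h0
      simpa [map_add] using this
    exact (mul_eq_zero.mp h).resolve_left hne
  refine ⟨h1, fun hre => ?_⟩
  have h := key u hLu lam heigu
  have hne : starRingEnd ℂ lam + lam ≠ 0 := by
    intro h0
    apply hre
    have h0re := congrArg Complex.re h0
    simp [Complex.add_re, Complex.conj_re] at h0re
    linarith
  exact (mul_eq_zero.mp h).resolve_left hne
end
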